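/- arXiv:2503.04591 — 8 statements merged into one kernel-verified Lean document; each statement's English description precedes it below -/
import Mathlib

section
/- Let n ≥ 1 and let μ be a finite sequence of nonempty subsets (blocks) of {0,…,n−1}. Then μ belongs to BS_n ∩ φ(BP_n) (i.e., μ is simultaneously a block-sequential update schedule and the block-sequence form of some block-parallel update schedule) if and only if μ is an ordered partition of {0,…,n−1} all of whose blocks have the same cardinality. -/
/-!
Since distinct o-blocks of a block-parallel schedule `μ` are disjoint and each block of `φ(μ)`
takes exactly one element from every o-block, all blocks of `φ(μ)` have `|μ|` elements.
Conversely, an ordered partition `W₀, …, W_{L-1}` into blocks of size `c` is `φ` of the schedule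
whose `k`-th o-block (`k < c`) lists the `k`-th smallest elements of `W₀, …, W_{L-1}` in turn:
all o-blocks have length `L`, so `ℓ = L` and the `t`-th block is `W_t`.
-/

open Finset Nat

/-- `μ` is a block-parallel update schedule (partitioned order) of size `n`:
a finite set of nonempty lists (o-blocks) of elements of `Fin n` such that
every element of `Fin n` occurs exactly once in exactly one o-block. -/
def IsBP (n : ℕ) (μ : Finset (List (Fin n))) : Prop :=
  (∀ S ∈ μ, S ≠ []) ∧ ∀ i : Fin n, (μ.sum fun S => S.count i) = 1

/-- The number of substeps `ℓ = lcm` of the o-block lengths. -/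
def bpLen {n : ℕ} (μ : Finset (List (Fin n))) : ℕ := μ.lcm List.length

/-- The block updated at substep `t`: `W_t = { S[t mod |S|] : S ∈ μ }`. -/
def blockAt {n : ℕ} (μ : Finset (List (Fin n))) (t : ℕ) : Finset (Fin n) :=
  μ.biUnion fun S => (S[t % S.length]?).toFinset

/-- `φ(μ)`: the rewriting of a block-parallel update schedule as a sequence of blocks. -/
def phiBP {n : ℕ} (μ : Finset (List (Fin n))) : List (Finset (Fin n)) :=
  (List.range (bpLen μ)).map (blockAt μ)

/-- `Ws` is a block-sequential update schedule of size `n`: an ordered partition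
of `Fin n` into nonempty pairwise disjoint blocks covering everything. -/
def IsBS (n : ℕ) (Ws : List (Finset (Fin n))) : Prop :=
  (∀ W ∈ Ws, W.Nonempty) ∧ Ws.Pairwise Disjoint ∧ ∀ i : Fin n, ∃ W ∈ Ws, i ∈ W

lemma List.count_ofFn {α : Type*} [DecidableEq α] {L : ℕ} (f : Fin L → α) (a : α) :
    (List.ofFn f).count a = #{t | f t = a} := by
  rw [← Multiset.coe_count, ← Fin.univ_val_map, Multiset.count_map, Finset.card_def]
  simp [Finset.filter_val, eq_comm]

lemma existsUnique_mem_getElem_of_pairwise_disjoint {α : Type*} {Ws : List (Finset α)}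
    (hpw : Ws.Pairwise Disjoint) {a : α} (ha : ∃ W ∈ Ws, a ∈ W) :
    ∃! t : Fin Ws.length, a ∈ Ws[t] := by
  obtain ⟨W, hW, haW⟩ := ha
  obtain ⟨t, ht, rfl⟩ := List.mem_iff_getElem.mp hW
  refine ⟨⟨t, ht⟩, haW, fun s has => ?_⟩
  have hdisj := List.pairwise_iff_getElem.mp hpw
  by_contra hst
  rcases Nat.lt_or_gt_of_ne (Fin.val_ne_of_ne hst) with h | h
  · exact Finset.disjoint_left.mp (hdisj _ _ s.isLt ht h) has haW
  · exact Finset.disjoint_left.mp (hdisj _ _ ht s.isLt h) haW has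

namespace IsBP

variable {n : ℕ} {μ : Finset (List (Fin n))}

lemma eq_of_mem (h : IsBP n μ) {S S' : List (Fin n)} (hS : S ∈ μ) (hS' : S' ∈ μ) {i : Fin n}
    (hi : i ∈ S) (hi' : i ∈ S') : S = S' := by
  by_contra hSS'
  have h2 : S.count i + S'.count i ≤ μ.sum fun S => S.count i :=
    Finset.add_le_sum (fun _ _ => Nat.zero_le _) hS hS' hSS'
  have := List.count_pos_iff.mpr hi
  have := List.count_pos_iff.mpr hi'
  rw [h.2 i] at h2
  omega

lemma card_blockAt (h : IsBP n μ) (t : ℕ) : #(blockAt μ t) = #μ := by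
  have hlt : ∀ S ∈ μ, t % S.length < S.length := fun S hS =>
    Nat.mod_lt _ (List.length_pos_iff.mpr (h.1 S hS))
  have hsingle : ∀ S (hS : S ∈ μ),
      (S[t % S.length]?).toFinset = {S[t % S.length]'(hlt S hS)} := fun S hS => by
    rw [List.getElem?_eq_getElem (hlt S hS), Option.toFinset_some]
  rw [blockAt, Finset.card_biUnion]
  · simp +contextual [hsingle]
  · intro S hS S' hS' hSS'
    rw [Function.onFun, hsingle S hS, hsingle S' hS', Finset.disjoint_singleton]
    exact fun heq => hSS' <|
      h.eq_of_mem hS hS' (List.getElem_mem _) (by rw [heq]; exact List.getElem_mem _)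

lemma card_eq_of_mem_phiBP (h : IsBP n μ) : ∀ W ∈ phiBP μ, #W = #μ := by
  simp only [phiBP, List.forall_mem_map]
  exact fun t _ => h.card_blockAt t

end IsBP

def gridSchedule {n c L : ℕ} (e : Fin c → Fin L → Fin n) : Finset (List (Fin n)) :=
  univ.image fun k => List.ofFn (e k)

section gridSchedule

variable {n c L : ℕ} {e : Fin c → Fin L → Fin n}

lemma length_of_mem_gridSchedule {S : List (Fin n)} (hS : S ∈ gridSchedule e) :
    S.length = L := by
  obtain ⟨k, -, rfl⟩ := Finset.mem_image.mp hS
  exact List.length_ofFn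

lemma isBP_gridSchedule (hL : 0 < L) (he : ∀ i, ∃! p : Fin c × Fin L, e p.1 p.2 = i) :
    IsBP n (gridSchedule e) := by
  have hinj : Function.Injective fun k => List.ofFn (e k) := by
    intro k k' hkk
    have h0 : e k ⟨0, hL⟩ = e k' ⟨0, hL⟩ := congrFun (List.ofFn_inj.mp hkk) _
    exact congrArg Prod.fst ((he _).unique (y₁ := (k, ⟨0, hL⟩)) (y₂ := (k', ⟨0, hL⟩)) rfl h0.symm)
  refine ⟨fun S hS => List.ne_nil_of_length_pos (length_of_mem_gridSchedule hS ▸ hL), ?_⟩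
  intro i
  rw [gridSchedule, Finset.sum_image fun k _ k' _ h => hinj h]
  simp only [List.count_ofFn, card_filter, ← Fintype.sum_prod_type']
  rw [← card_filter, ← Fintype.existsUnique_iff_card_one]
  exact he i

lemma bpLen_gridSchedule (hc : 0 < c) : bpLen (gridSchedule e) = L := by
  unfold bpLen
  apply Nat.dvd_antisymm
  · exact Finset.lcm_dvd fun S hS => (length_of_mem_gridSchedule hS).dvd
  · have hmem : List.ofFn (e ⟨0, hc⟩) ∈ gridSchedule e := Finset.mem_image_of_mem _ (mem_univ _)
    simpa using Finset.dvd_lcm (f := List.length) hmem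

lemma blockAt_gridSchedule (t : Fin L) :
    blockAt (gridSchedule e) t = univ.image fun k => e k t := by
  ext i
  simp [blockAt, gridSchedule, Nat.mod_eq_of_lt t.isLt, eq_comm]

lemma phiBP_gridSchedule (hc : 0 < c) :
    phiBP (gridSchedule e) = List.ofFn fun t => univ.image fun k => e k t := by
  apply List.ext_getElem
  · simp [phiBP, bpLen_gridSchedule hc]
  · intro t ht _
    simp only [phiBP, List.getElem_map, List.getElem_range, List.getElem_ofFn]
    exact blockAt_gridSchedule ⟨t, by simpa [phiBP, bpLen_gridSchedule hc] using ht⟩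

end gridSchedule

lemma exists_isBP_phiBP_eq {n c : ℕ} (hn : 1 ≤ n) {Ws : List (Finset (Fin n))}
    (hBS : IsBS n Ws) (hc : ∀ W ∈ Ws, #W = c) :
    ∃ μ : Finset (List (Fin n)), IsBP n μ ∧ phiBP μ = Ws := by
  obtain ⟨hne, hpw, hcov⟩ := hBS
  have hL : 0 < Ws.length := by
    obtain ⟨W, hW, -⟩ := hcov ⟨0, hn⟩
    exact List.length_pos_of_mem hW
  have hc0 : 0 < c := hc _ (List.getElem_mem hL) ▸ (hne _ (List.getElem_mem hL)).card_pos
  let e : Fin c → Fin Ws.length → Fin n := fun k t =>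
    Ws[t].orderEmbOfFin (hc _ (List.getElem_mem _)) k
  have he : ∀ i, ∃! p : Fin c × Fin Ws.length, e p.1 p.2 = i := by
    intro i
    obtain ⟨t, hit, ht⟩ := existsUnique_mem_getElem_of_pairwise_disjoint hpw (hcov i)
    rw [← Finset.mem_coe, ← Finset.range_orderEmbOfFin Ws[t] (hc _ (List.getElem_mem _))] at hit
    obtain ⟨k, hk⟩ := hit
    refine ⟨(k, t), hk, ?_⟩
    rintro ⟨k', t'⟩ (hk' : e k' t' = i)
    obtain rfl : t' = t := ht t' (hk' ▸ Finset.orderEmbOfFin_mem _ _ _)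
    obtain rfl : k' = k := (Ws[t'].orderEmbOfFin _).injective (hk'.trans hk.symm)
    rfl
  refine ⟨gridSchedule e, isBP_gridSchedule hL he, ?_⟩
  rw [phiBP_gridSchedule hc0]
  conv_rhs => rw [← List.ofFn_getElem (xs := Ws)]
  exact congrArg List.ofFn (funext fun t => Finset.image_orderEmbOfFin_univ _ _)

theorem bs_inter_phi_bp_iff_general (n : ℕ) (hn : 1 ≤ n) (Ws : List (Finset (Fin n))) :
    (IsBS n Ws ∧ ∃ μ : Finset (List (Fin n)), IsBP n μ ∧ phiBP μ = Ws) ↔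
      (IsBS n Ws ∧ ∃ c : ℕ, ∀ W ∈ Ws, W.card = c) := by
  refine and_congr_right fun hBS => ⟨?_, ?_⟩
  · rintro ⟨μ, hμ, rfl⟩
    exact ⟨#μ, hμ.card_eq_of_mem_phiBP⟩
  · rintro ⟨c, hc⟩
    exact exists_isBP_phiBP_eq hn hBS hc

/-- A sequence of nonempty blocks is simultaneously block-sequential and the
block-sequence form of some block-parallel schedule iff it is an ordered
partition all of whose blocks have the same cardinality. -/
theorem bs_inter_phi_bp_iff (n : ℕ) (hn : 1 ≤ n) (Ws : List (Finset (Fin n)))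
    (hne : ∀ W ∈ Ws, W.Nonempty) :
    (IsBS n Ws ∧ ∃ μ : Finset (List (Fin n)), IsBP n μ ∧ phiBP μ = Ws) ↔
      (IsBS n Ws ∧ ∃ c : ℕ, ∀ W ∈ Ws, W.card = c) :=
  bs_inter_phi_bp_iff_general n hn Ws
end

section
/- For every n ≥ 1, the number of sequences of blocks that are simultaneously block-sequential and block-parallel, i.e., |BS_n ∩ φ(BP_n)|, equals Σ_{d | n} n! / ((n/d)!)^d. Equivalently, the number of ordered partitions of an n-element set into blocks all of equal size equals Σ_{d | n} n! / ((n/d)!)^d (the sum ranging over positive divisors d of n, with d the number of blocks and n/d the common block size). -/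
open Finset Nat

/-! A block of `φ(μ)` picks exactly one element from each o-block, so every block of `φ(μ)` has
`|μ|` elements: a block-sequential `φ(μ)` is an ordered partition of `Fin n` into `d ∣ n` blocks of
equal size. Conversely, if the blocks of such a partition are the rows of a `d × m` grid, the
columns of the grid are the o-blocks of a block-parallel schedule whose image under `φ` is the
partition. An ordered partition into `d` blocks of size `m` is the same as a map `Fin n → Fin d`
whose fibers all have `m` elements, and `Perm (Fin n)` acts transitively on these maps with
stabilizers of order `(m!)^d`, which gives `n! / (m!)^d` of them. -/

section Fibers

variable {α ι : Type*} [Fintype α] [DecidableEq ι]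

lemma card_filter_fst_eq {κ : Type*} [Fintype ι] [Fintype κ] (t : ι) :
    #{p : ι × κ | p.1 = t} = Fintype.card κ := by
  rw [show ({p : ι × κ | p.1 = t} : Finset _) = {t} ×ˢ univ by ext ⟨a, b⟩; simp [eq_comm],
    card_product, card_singleton, one_mul, Finset.card_univ]

lemma exists_equiv_comp_eq {β : Type*} [Fintype β] {f : α → ι} {g : β → ι}
    (h : ∀ i, #{a | f a = i} = #{b | g b = i}) : ∃ e : α ≃ β, ∀ a, g (e a) = f a := by
  refine ⟨Equiv.ofFiberEquiv fun i => Fintype.equivOfCardEq ?_, Equiv.ofFiberEquiv_map _⟩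
  simp only [Fintype.card_subtype, h]

lemma card_filter_comp_equiv (f : α → ι) (e : α ≃ α) (i : ι) :
    #{a | f (e a) = i} = #{a | f a = i} :=
  card_equiv e (by simp)

lemma card_filter_card_fiber_eq_mul_prod_factorial [DecidableEq α] [Fintype ι] (f₀ : α → ι) :
    #{f : α → ι | ∀ i, #{a | f a = i} = #{a | f₀ a = i}} * ∏ i, (#{a | f₀ a = i})! =
      (Fintype.card α)! := by
  set T : Finset (α → ι) := {f | ∀ i, #{a | f a = i} = #{a | f₀ a = i}}
  have hstab : #{g : Equiv.Perm α | f₀ ∘ g = f₀} = ∏ i, (#{a | f₀ a = i})! := by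
    simpa only [Fintype.card_subtype] using DomMulAct.stabilizer_card f₀
  -- `g ↦ f₀ ∘ g` maps the permutations onto `T`; its fibers are cosets of the stabilizer of `f₀`.
  have hfiber :
      ∀ f ∈ T, #{g : Equiv.Perm α | f₀ ∘ g = f} = #{g : Equiv.Perm α | f₀ ∘ g = f₀} := by
    intro f hf
    obtain ⟨h, hh⟩ := exists_equiv_comp_eq (f := f) (g := f₀) (by simpa [T] using hf)
    refine card_equiv (Equiv.mulRight h⁻¹) fun g => ?_
    simp only [mem_filter, mem_univ, true_and, Equiv.coe_mulRight, Equiv.Perm.coe_mul]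
    constructor
    · rintro rfl
      funext a
      simpa using (hh (h⁻¹ a)).symm
    · intro hg
      funext a
      simpa [← hh a] using congrFun hg (h a)
  calc #T * ∏ i, (#{a | f₀ a = i})!
      = ∑ f ∈ T, #{g : Equiv.Perm α | f₀ ∘ g = f} := by
        rw [sum_congr rfl hfiber, sum_const, smul_eq_mul, hstab]
    _ = #(univ : Finset (Equiv.Perm α)) := by
        refine (card_eq_sum_card_fiberwise fun g _ => ?_).symm
        simp [T, card_filter_comp_equiv]
    _ = (Fintype.card α)! := by rw [Finset.card_univ, Fintype.card_perm]

end Fibers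

section FiberList

variable {α : Type*} [Fintype α] {d : ℕ}

def fiberList (f : α → Fin d) : List (Finset α) :=
  List.ofFn fun t => ({a | f a = t} : Finset α)

lemma length_fiberList (f : α → Fin d) : (fiberList f).length = d := List.length_ofFn

lemma fiberList_injective : Function.Injective (fiberList (α := α) (d := d)) := by
  intro f g hfg
  funext a
  have ha : a ∈ ({x | f x = f a} : Finset α) := by simp
  rw [congrFun (List.ofFn_injective hfg) (f a), mem_filter] at ha
  exact ha.2.symm

lemma exists_fiberList_eq {Ws : List (Finset α)} (hdisj : Ws.Pairwise Disjoint)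
    (hcover : ∀ a, ∃ W ∈ Ws, a ∈ W) : ∃ d, ∃ f : α → Fin d, fiberList f = Ws := by
  have hindex : ∀ a, ∃ t : Fin Ws.length, a ∈ Ws[t] := fun a => by
    obtain ⟨W, hW, ha⟩ := hcover a
    obtain ⟨t, rfl⟩ := List.mem_iff_get.1 hW
    exact ⟨t, ha⟩
  choose f hf using hindex
  refine ⟨_, f, List.ext_getElem (length_fiberList f) fun t ht _ => ?_⟩
  ext a
  simp only [fiberList, List.getElem_ofFn, mem_filter, mem_univ, true_and]
  constructor
  · intro h
    obtain rfl : (f a : ℕ) = t := congrArg Fin.val h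
    exact hf a
  · intro ha
    by_contra hne
    have hne' : (f a : ℕ) ≠ t := fun h => hne (Fin.ext h)
    rcases Nat.lt_or_gt_of_ne hne' with hlt | hlt
    · exact disjoint_left.1 (List.pairwise_iff_getElem.1 hdisj _ _ _ _ hlt) (hf a) ha
    · exact disjoint_left.1 (List.pairwise_iff_getElem.1 hdisj _ _ _ _ hlt) ha (hf a)

lemma isBS_fiberList {n : ℕ} (f : Fin n → Fin d)
    (hne : ∀ t, ({i | f i = t} : Finset _).Nonempty) : IsBS n (fiberList f) := by
  refine ⟨?_, ?_, fun i => ⟨_, List.mem_ofFn.2 ⟨f i, rfl⟩, by simp⟩⟩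
  · simp only [fiberList, List.mem_ofFn]
    rintro W ⟨t, rfl⟩
    exact hne t
  · refine List.pairwise_ofFn.2 fun s t hst => disjoint_left.2 fun i hs ht => hst.ne ?_
    simp only [mem_filter, mem_univ, true_and] at hs ht
    rw [← hs, ht]

end FiberList

section BlockParallel

variable {n : ℕ}

lemma IsBP.notMem_of_mem {μ : Finset (List (Fin n))} (hμ : IsBP n μ) {S S' : List (Fin n)}
    (hS : S ∈ μ) (hS' : S' ∈ μ) (hne : S ≠ S') {i : Fin n} (hi : i ∈ S) : i ∉ S' := by
  intro hi'
  have hle : ∑ X ∈ {S, S'}, X.count i ≤ ∑ X ∈ μ, X.count i :=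
    sum_le_sum_of_subset (insert_subset hS (singleton_subset_iff.2 hS'))
  rw [sum_pair hne, hμ.2 i] at hle
  have := List.count_pos_iff.2 hi
  have := List.count_pos_iff.2 hi'
  omega

lemma card_blockAt {μ : Finset (List (Fin n))} (hμ : IsBP n μ) (t : ℕ) :
    #(blockAt μ t) = #μ := by
  have hget : ∀ S (hS : S ∈ μ), S[t % S.length]? = some (S[t % S.length]'
      (Nat.mod_lt _ (List.length_pos_iff.2 (hμ.1 S hS)))) := fun S _ =>
    List.getElem?_eq_getElem _
  rw [blockAt, card_biUnion]
  · rw [sum_congr rfl fun S hS => by rw [hget S hS, Option.toFinset_some, card_singleton]]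
    simp
  · intro S hS S' hS' hne
    rw [Function.onFun, hget S hS, hget S' hS', Option.toFinset_some, Option.toFinset_some,
      disjoint_singleton]
    intro h
    exact hμ.notMem_of_mem hS hS' hne (List.getElem_mem _)
      (by rw [h]; exact List.getElem_mem _)

lemma pos_bpLen {μ : Finset (List (Fin n))} (hμ : IsBP n μ) : 0 < bpLen μ := by
  refine Nat.pos_of_ne_zero fun h => ?_
  obtain ⟨S, hS, hlen⟩ := lcm_eq_zero_iff.1 h
  exact hμ.1 S hS (List.length_eq_zero_iff.1 hlen)

end BlockParallel

section Grid

variable {n d m : ℕ} (e : Fin d × Fin m ≃ Fin n)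

/-- The rows `t ↦ {e (t, j) | j}` of the grid `e` will be the blocks of `φ (gridBP e)`, and its
columns are the o-blocks of `gridBP e`. -/
def gridColumn (j : Fin m) : List (Fin n) := List.ofFn fun t => e (t, j)

def gridBP : Finset (List (Fin n)) := univ.image (gridColumn e)

lemma gridColumn_injective (hd : 0 < d) : Function.Injective (gridColumn e) := by
  intro j j' h
  have := congrFun (List.ofFn_injective h) ⟨0, hd⟩
  exact (Prod.mk.inj (e.injective this)).2

lemma count_gridColumn (i : Fin n) (j : Fin m) :
    (gridColumn e j).count i = if (e.symm i).2 = j then 1 else 0 := by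
  have hmem : i ∈ gridColumn e j ↔ (e.symm i).2 = j := by
    simp only [gridColumn, List.mem_ofFn]
    constructor
    · rintro ⟨t, rfl⟩
      simp
    · intro h
      exact ⟨(e.symm i).1, by rw [← h, Prod.mk.eta, Equiv.apply_symm_apply]⟩
  have hnodup : (gridColumn e j).Nodup :=
    List.nodup_ofFn.2 fun t t' h => (Prod.mk.inj (e.injective h)).1
  split_ifs with h
  · exact List.count_eq_one_of_mem hnodup (hmem.2 h)
  · exact List.count_eq_zero_of_not_mem (mt hmem.1 h)

lemma isBP_gridBP (hd : 0 < d) : IsBP n (gridBP e) := by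
  refine ⟨?_, fun i => ?_⟩
  · simp only [gridBP, mem_image, mem_univ, true_and]
    rintro S ⟨j, rfl⟩
    simpa [gridColumn] using hd.ne'
  · rw [gridBP, sum_image fun j _ j' _ h => gridColumn_injective e hd h]
    simp [count_gridColumn]

lemma bpLen_gridBP (hm : 0 < m) : bpLen (gridBP e) = d := by
  have hlen : ∀ j, (gridColumn e j).length = d := fun j => List.length_ofFn
  refine Nat.dvd_antisymm (lcm_dvd fun S hS => ?_) ?_
  · obtain ⟨j, -, rfl⟩ := mem_image.1 hS
    rw [hlen]
  · simpa [hlen, bpLen, gridBP] using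
      dvd_lcm (f := List.length) (mem_image_of_mem (gridColumn e) (mem_univ ⟨0, hm⟩))

lemma blockAt_gridBP (t : Fin d) :
    blockAt (gridBP e) t = ({i | (e.symm i).1 = t} : Finset (Fin n)) := by
  ext i
  simp only [blockAt, gridBP, gridColumn, mem_biUnion, mem_image, mem_univ, true_and,
    Option.mem_toFinset, Option.mem_def, exists_exists_eq_and, List.length_ofFn,
    Nat.mod_eq_of_lt t.isLt, Fin.is_lt, getElem?_pos, List.getElem_ofFn, Fin.eta,
    Option.some.injEq, mem_filter]
  constructor
  · rintro ⟨j, rfl⟩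
    simp
  · rintro rfl
    exact ⟨(e.symm i).2, by simp⟩

lemma phiBP_gridBP (hm : 0 < m) : phiBP (gridBP e) = fiberList fun i => (e.symm i).1 := by
  refine List.ext_getElem (by simp [phiBP, bpLen_gridBP e hm, length_fiberList]) fun t h _ => ?_
  simp only [phiBP, List.getElem_map, List.getElem_range, fiberList, List.getElem_ofFn]
  exact blockAt_gridBP e ⟨t, by simpa [phiBP, bpLen_gridBP e hm] using h⟩

end Grid

def equalOrderedPartitions (n : ℕ) : Finset (List (Finset (Fin n))) :=
  n.divisors.biUnion fun d =>
    ({f : Fin n → Fin d | ∀ t, #{i | f i = t} = n / d} : Finset _).image fiberList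

section Characterization

variable {n : ℕ}

lemma exists_fiberList_of_isBS_of_phiBP {Ws : List (Finset (Fin n))} (hBS : IsBS n Ws)
    {μ : Finset (List (Fin n))} (hμ : IsBP n μ) (hφ : phiBP μ = Ws) :
    ∃ d ∈ n.divisors, ∃ f : Fin n → Fin d,
      (∀ t, #{i | f i = t} = n / d) ∧ fiberList f = Ws := by
  obtain ⟨d, f, rfl⟩ := exists_fiberList_eq hBS.2.1 hBS.2.2
  have hmem : ∀ t, ({i | f i = t} : Finset (Fin n)) ∈ fiberList f := fun t =>
    List.mem_ofFn.2 ⟨t, rfl⟩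
  have hcard : ∀ t, #{i | f i = t} = #μ := fun t => by
    obtain ⟨s, -, hs⟩ := List.mem_map.1 (hφ ▸ hmem t)
    rw [← hs, card_blockAt hμ]
  have hd : 0 < d := by simpa [← length_fiberList f, ← hφ, phiBP] using pos_bpLen hμ
  have hμ_pos : 0 < #μ := hcard ⟨0, hd⟩ ▸ Finset.card_pos.2 (hBS.1 _ (hmem _))
  have hn : n = d * #μ := by
    calc n = ∑ t, #{i | f i = t} := by
          simpa using card_eq_sum_card_fiberwise (s := univ) (t := univ) (f := f) (by simp)
      _ = d * #μ := by simp [hcard]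
  refine ⟨d, Nat.mem_divisors.2 ⟨⟨_, hn⟩, hn ▸ (Nat.mul_pos hd hμ_pos).ne'⟩, f,
    fun t => ?_, rfl⟩
  rw [hcard]
  exact (Nat.div_eq_of_eq_mul_right hd hn).symm

lemma exists_isBP_phiBP_eq_fiberList {d m : ℕ} (hd : 0 < d) (hm : 0 < m) (f : Fin n → Fin d)
    (hf : ∀ t, #{i | f i = t} = m) : ∃ μ, IsBP n μ ∧ phiBP μ = fiberList f := by
  obtain ⟨e, he⟩ := exists_equiv_comp_eq (f := f) (g := (Prod.fst : Fin d × Fin m → Fin d))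
    (by simp [hf, card_filter_fst_eq])
  refine ⟨gridBP e.symm, isBP_gridBP _ hd, ?_⟩
  simp [phiBP_gridBP _ hm, he]

lemma bs_inter_phi_bp_eq_equalOrderedPartitions :
    {Ws | IsBS n Ws ∧ ∃ μ, IsBP n μ ∧ phiBP μ = Ws} = (equalOrderedPartitions n : Set _) := by
  ext Ws
  simp only [Set.mem_ofPred_eq, mem_coe, equalOrderedPartitions, mem_biUnion, mem_image,
    mem_filter, mem_univ, true_and]
  constructor
  · rintro ⟨hBS, μ, hμ, hφ⟩
    exact exists_fiberList_of_isBS_of_phiBP hBS hμ hφ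
  · rintro ⟨d, hd, f, hf, rfl⟩
    have hd_pos := Nat.pos_of_mem_divisors hd
    have hm : 0 < n / d := Nat.div_pos (Nat.divisor_le hd) hd_pos
    exact ⟨isBS_fiberList f fun t => Finset.card_pos.1 (hf t ▸ hm),
      exists_isBP_phiBP_eq_fiberList hd_pos hm f hf⟩

end Characterization

lemma card_filter_card_fiber_eq_const_mul_pow_factorial {n d m : ℕ} (h : d * m = n) :
    #{f : Fin n → Fin d | ∀ t, #{i | f i = t} = m} * (m !) ^ d = n ! := by
  let e : Fin n ≃ Fin d × Fin m := Fintype.equivOfCardEq (by simp [h])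
  have hf₀ : ∀ t, #{i | (e i).1 = t} = m := fun t => by
    rw [card_equiv e (t := {p : Fin d × Fin m | p.1 = t}) (by simp), card_filter_fst_eq,
      Fintype.card_fin]
  simpa [hf₀] using card_filter_card_fiber_eq_mul_prod_factorial fun i => (e i).1

lemma card_equalOrderedPartitions (n : ℕ) :
    #(equalOrderedPartitions n) = ∑ d ∈ n.divisors, n ! / ((n / d)!) ^ d := by
  rw [equalOrderedPartitions, card_biUnion]
  · refine sum_congr rfl fun d hd => ?_
    rw [Finset.card_image_of_injective _ fiberList_injective]
    exact (Nat.div_eq_of_eq_mul_left (by positivity)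
      (card_filter_card_fiber_eq_const_mul_pow_factorial
        (Nat.mul_div_cancel' (Nat.dvd_of_mem_divisors hd))).symm).symm
  · intro d _ d' _ hne
    refine disjoint_left.2 fun Ws h h' => hne ?_
    obtain ⟨f, -, rfl⟩ := mem_image.1 h
    obtain ⟨f', -, hf'⟩ := mem_image.1 h'
    rw [← length_fiberList f, ← hf', length_fiberList]

theorem card_bs_inter_phi_bp_general (n : ℕ) :
    {Ws : List (Finset (Fin n)) |
        IsBS n Ws ∧ ∃ μ : Finset (List (Fin n)), IsBP n μ ∧ phiBP μ = Ws}.ncard =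
      ∑ d ∈ n.divisors, n ! / ((n / d)!) ^ d := by
  rw [bs_inter_phi_bp_eq_equalOrderedPartitions, Set.ncard_coe_finset, card_equalOrderedPartitions]

/-- The number of sequences of blocks that are simultaneously block-sequential
and block-parallel, i.e. `|BS_n ∩ φ(BP_n)|`, equals `Σ_{d ∣ n} n! / ((n/d)!)^d`. -/
theorem card_bs_inter_phi_bp (n : ℕ) (hn : 1 ≤ n) :
    {Ws : List (Finset (Fin n)) |
        IsBS n Ws ∧ ∃ μ : Finset (List (Fin n)), IsBP n μ ∧ phiBP μ = Ws}.ncard =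
      ∑ d ∈ n.divisors, n ! / ((n / d)!) ^ d :=
  card_bs_inter_phi_bp_general n
end

section
/- For every n ≥ 1, the number of block-parallel update schedules of size n (equivalently, the number of sets of nonempty lists whose underlying elements partition an n-element set, with each element occurring exactly once) is |BP_n| = Σ_{λ ⊢ n} n! / ∏_{j=1}^{d(λ)} m_λ(j)!, where the sum ranges over all integer partitions λ of n. -/
open Finset Nat

/-!
Fix a partition `λ ⊢ n` and list its parts in increasing order. Cutting an ordering of `Fin n`
into consecutive pieces of these lengths gives a block-parallel schedule whose multiset of o-block
lengths is `λ`, and every such schedule arises this way. Two orderings give the same schedule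
exactly when their pieces differ by a permutation preserving lengths, so each schedule comes from
`∏ j, m_λ(j)!` of the `n!` orderings.
-/

namespace List

variable {α β : Type*}

theorem splitLengths_map_length_flatten (L : List (List α)) :
    (L.map length).splitLengths L.flatten = L := by
  induction L with
  | nil => rfl
  | cons b L ih => simp [splitLengths_cons, ih]

theorem Nodup.of_flatten {L : List (List α)} (h : L.flatten.Nodup) (hL : [] ∉ L) : L.Nodup := by
  refine (nodup_flatten.1 h).2.imp_of_mem fun {a b} ha _ hab hEq => ?_
  subst hEq
  obtain ⟨x, hx⟩ := exists_mem_of_ne_nil a (ne_of_mem_of_not_mem ha hL)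
  exact hab hx hx

theorem Perm.exists_perm_map_eq [DecidableEq α] (f : α → β) :
    ∀ {l : List α} {ps : List β}, (l.map f).Perm ps → ∃ l' : List α, l'.Perm l ∧ l'.map f = ps
  | l, [], h => ⟨[], by simpa using h.symm, rfl⟩
  | l, k :: ps, h => by
    obtain ⟨a, ha, rfl⟩ := mem_map.1 (h.symm.subset mem_cons_self)
    have hl : l.Perm (a :: l.erase a) := perm_cons_erase ha
    have hps : ((l.erase a).map f).Perm ps := by simpa using ((hl.map f).symm.trans h).cons_inv
    obtain ⟨l', hl', hmap⟩ := exists_perm_map_eq f hps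
    exact ⟨a :: l', (hl'.cons a).trans hl.symm, by simp [hmap]⟩

variable [DecidableEq α] [DecidableEq β]

theorem filter_permutations_map_eq_cons (f : α → β) (v : List α) (k : β) (ps : List β) :
    {bs ∈ v.permutations.toFinset | bs.map f = k :: ps} =
      {a ∈ v.toFinset | f a = k}.biUnion fun a =>
        {bs ∈ (v.erase a).permutations.toFinset | bs.map f = ps}.image (a :: ·) := by
  ext bs
  simp only [Finset.mem_filter, Finset.mem_biUnion, mem_toFinset, mem_permutations,
    Finset.mem_image]
  constructor
  · rintro ⟨hp, hmap⟩
    obtain _ | ⟨a, bs⟩ := bs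
    · simp at hmap
    · obtain ⟨ha, hbs⟩ := cons_perm_iff_perm_erase.1 hp
      simp only [map_cons, cons.injEq] at hmap
      exact ⟨a, ⟨ha, hmap.1⟩, bs, ⟨hbs, hmap.2⟩, rfl⟩
  · rintro ⟨a, ⟨ha, rfl⟩, bs, ⟨hp, rfl⟩, rfl⟩
    exact ⟨cons_perm_iff_perm_erase.2 ⟨ha, hp⟩, rfl⟩

theorem card_filter_toFinset_eq_count_map (f : α → β) {v : List α} (hv : v.Nodup) (k : β) :
    #{a ∈ v.toFinset | f a = k} = (v.map f).count k := by
  rw [count_eq_countP, countP_map, countP_eq_length_filter,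
    ← toFinset_card_of_nodup (hv.filter _), toFinset_filter]
  simp

omit [DecidableEq α] in
theorem prod_factorial_count_cons {s : Finset β} {k : β} (hk : k ∈ s) (ps : List β) :
    ∏ b ∈ s, ((k :: ps).count b)! = (ps.count k + 1) * ∏ b ∈ s, (ps.count b)! := by
  rw [← mul_prod_erase s _ hk, ← mul_prod_erase s (fun b => (ps.count b)!) hk, count_cons_self,
    factorial_succ, mul_assoc]
  congr 2
  exact prod_congr rfl fun b hb => by rw [count_cons_of_ne (ne_of_mem_erase hb).symm]

theorem card_filter_permutations_map_eq (f : α → β) {s : Finset β} :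
    ∀ {v : List α} {ps : List β}, v.Nodup → (v.map f).Perm ps → (∀ b ∈ ps, b ∈ s) →
      #{bs ∈ v.permutations.toFinset | bs.map f = ps} = ∏ b ∈ s, (ps.count b)!
  | v, [], _, h, _ => by
    obtain rfl : v = [] := by simpa using h
    simp [permutations, Finset.filter_singleton]
  | v, k :: ps, hv, h, hs => by
    -- the first entry is any of the `count k` elements of weight `k`, the rest is recursive
    rw [filter_permutations_map_eq_cons, card_biUnion, sum_congr rfl fun a ha => ?_, sum_const,
      card_filter_toFinset_eq_count_map f hv, h.count_eq, smul_eq_mul, count_cons_self,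
      prod_factorial_count_cons (hs k mem_cons_self)]
    · obtain ⟨hav, rfl⟩ := Finset.mem_filter.1 ha
      rw [Finset.card_image_of_injective _ cons_injective]
      have hps : ((v.erase a).map f).Perm ps := by
        simpa using (((perm_cons_erase (mem_toFinset.1 hav)).map f).symm.trans h).cons_inv
      exact card_filter_permutations_map_eq f (hv.erase a) hps
        fun b hb => hs b (mem_cons_of_mem _ hb)
    · intro a _ b _ hab
      simp only [Function.onFun, Finset.disjoint_left, Finset.mem_image]
      rintro _ ⟨_, _, rfl⟩ ⟨_, _, hba⟩
      exact hab (cons.inj hba).1.symm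

end List

theorem isBP_toFinset_iff {n : ℕ} {bs : List (List (Fin n))} (hbs : bs.Nodup) :
    IsBP n bs.toFinset ↔ [] ∉ bs ∧ bs.flatten.Perm (List.finRange n) := by
  simp only [IsBP, List.mem_toFinset, List.sum_toFinset _ hbs, ← List.count_flatten,
    List.perm_iff_count, List.count_finRange]
  exact and_congr_left' ⟨fun h hnil => h _ hnil rfl, fun h S hS hnil => h (hnil ▸ hS)⟩

theorem IsBP.flatten_perm {n : ℕ} {μ : Finset (List (Fin n))} (hμ : IsBP n μ)
    {bs : List (List (Fin n))} (hbs : bs.Perm μ.toList) : bs.flatten.Perm (List.finRange n) :=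
  hbs.flatten.trans ((isBP_toFinset_iff μ.nodup_toList).1 (by rwa [Finset.toList_toFinset])).2

def orderings (n : ℕ) : Finset (List (Fin n)) := (List.finRange n).permutations.toFinset

section Schedules

variable {n : ℕ} {l : List (Fin n)}

theorem mem_orderings : l ∈ orderings n ↔ l.Perm (List.finRange n) := by
  simp [orderings]

theorem card_orderings : #(orderings n) = n ! := by
  rw [orderings, List.toFinset_card_of_nodup (List.nodup_permutations _ (List.nodup_finRange n)),
    List.length_permutations, List.length_finRange]

def sortedParts (P : n.Partition) : List ℕ := P.parts.sort (· ≤ ·)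

theorem coe_sortedParts (P : n.Partition) : (sortedParts P : Multiset ℕ) = P.parts :=
  Multiset.sort_eq _ _

theorem mem_Icc_of_mem_sortedParts {P : n.Partition} {k : ℕ} (hk : k ∈ sortedParts P) :
    k ∈ Icc 1 n := by
  rw [← Multiset.mem_coe, coe_sortedParts] at hk
  exact mem_Icc.2 ⟨P.parts_pos hk, P.le_of_mem_parts hk⟩

theorem sum_sortedParts (P : n.Partition) : (sortedParts P).sum = n := by
  rw [← Multiset.sum_coe, coe_sortedParts, P.parts_sum]

def scheduleOf (P : n.Partition) (l : List (Fin n)) : Finset (List (Fin n)) :=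
  ((sortedParts P).splitLengths l).toFinset

variable {P : n.Partition}

theorem sum_sortedParts_eq_length (hl : l.Perm (List.finRange n)) :
    (sortedParts P).sum = l.length := by
  rw [hl.length_eq, List.length_finRange, sum_sortedParts]

theorem flatten_splitLengths_sortedParts (hl : l.Perm (List.finRange n)) :
    ((sortedParts P).splitLengths l).flatten = l :=
  List.flatten_splitLengths _ _ (sum_sortedParts_eq_length hl).ge

theorem map_length_splitLengths_sortedParts (hl : l.Perm (List.finRange n)) :
    ((sortedParts P).splitLengths l).map List.length = sortedParts P :=
  List.map_splitLengths_length _ _ (sum_sortedParts_eq_length hl).le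

theorem nil_notMem_splitLengths_sortedParts (hl : l.Perm (List.finRange n)) :
    [] ∉ (sortedParts P).splitLengths l := fun h => by
  have h0 : ([] : List (Fin n)).length ∈ sortedParts P :=
    map_length_splitLengths_sortedParts hl ▸ List.mem_map_of_mem h
  simpa using mem_Icc_of_mem_sortedParts h0

theorem nodup_splitLengths_sortedParts (hl : l.Perm (List.finRange n)) :
    ((sortedParts P).splitLengths l).Nodup :=
  .of_flatten
    (by rw [flatten_splitLengths_sortedParts hl]; exact hl.nodup_iff.2 (List.nodup_finRange n))
    (nil_notMem_splitLengths_sortedParts hl)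

theorem isBP_scheduleOf (hl : l.Perm (List.finRange n)) : IsBP n (scheduleOf P l) :=
  (isBP_toFinset_iff (nodup_splitLengths_sortedParts hl)).2
    ⟨nil_notMem_splitLengths_sortedParts hl, by rwa [flatten_splitLengths_sortedParts hl]⟩

theorem map_length_scheduleOf (hl : l.Perm (List.finRange n)) :
    (scheduleOf P l).val.map List.length = P.parts := by
  rw [scheduleOf, List.toFinset_val, (nodup_splitLengths_sortedParts hl).dedup, Multiset.map_coe,
    map_length_splitLengths_sortedParts hl, coe_sortedParts]

theorem scheduleOf_flatten {μ : Finset (List (Fin n))} {bs : List (List (Fin n))}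
    (hbs : bs.Perm μ.toList) (hmap : bs.map List.length = sortedParts P) :
    scheduleOf P bs.flatten = μ := by
  rw [scheduleOf, ← hmap, List.splitLengths_map_length_flatten, List.toFinset_eq_of_perm _ _ hbs,
    Finset.toList_toFinset]

theorem exists_scheduleOf_eq {μ : Finset (List (Fin n))} (hμ : IsBP n μ) :
    ∃ P : n.Partition, ∃ l ∈ orderings n, scheduleOf P l = μ := by
  have hsum : (μ.val.map List.length).sum = n := by
    rw [← Finset.coe_toList μ, Multiset.map_coe, Multiset.sum_coe, ← List.length_flatten,
      (hμ.flatten_perm (.refl _)).length_eq, List.length_finRange]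
  have hpos : ∀ {k}, k ∈ μ.val.map List.length → 0 < k := fun hk => by
    obtain ⟨S, hS, rfl⟩ := Multiset.mem_map.1 hk
    exact List.length_pos_iff.2 (hμ.1 S hS)
  let P : n.Partition := ⟨μ.val.map List.length, hpos, hsum⟩
  have hperm : (μ.toList.map List.length).Perm (sortedParts P) := by
    rw [← Multiset.coe_eq_coe, ← Multiset.map_coe, Finset.coe_toList, coe_sortedParts]
  obtain ⟨bs, hbs, hmap⟩ := hperm.exists_perm_map_eq
  exact ⟨P, bs.flatten, mem_orderings.2 (hμ.flatten_perm hbs), scheduleOf_flatten hbs hmap⟩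

theorem card_filter_scheduleOf_eq {l₀ : List (Fin n)} (hl₀ : l₀.Perm (List.finRange n)) :
    #{l ∈ orderings n | scheduleOf P l = scheduleOf P l₀} =
      ∏ j ∈ Icc 1 n, (P.parts.count j)! := by
  set μ := scheduleOf P l₀
  have hμ : IsBP n μ := isBP_scheduleOf hl₀
  have hperm : (μ.toList.map List.length).Perm (sortedParts P) := by
    rw [← Multiset.coe_eq_coe, ← Multiset.map_coe, Finset.coe_toList, map_length_scheduleOf hl₀,
      coe_sortedParts]
  simp only [← coe_sortedParts P, Multiset.coe_count]
  rw [← List.card_filter_permutations_map_eq List.length μ.nodup_toList hperm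
    fun _ => mem_Icc_of_mem_sortedParts]
  refine card_nbij' ((sortedParts P).splitLengths ·) List.flatten ?_ ?_ ?_ ?_
  · intro l hl
    simp only [coe_filter, Set.mem_ofPred_eq, mem_orderings, List.mem_toFinset,
      List.mem_permutations] at hl ⊢
    refine ⟨?_, map_length_splitLengths_sortedParts hl.1⟩
    rw [← hl.2]
    exact (List.toFinset_toList (nodup_splitLengths_sortedParts hl.1)).symm
  · intro bs hbs
    simp only [coe_filter, Set.mem_ofPred_eq, mem_orderings, List.mem_toFinset,
      List.mem_permutations] at hbs ⊢
    exact ⟨hμ.flatten_perm hbs.1, scheduleOf_flatten hbs.1 hbs.2⟩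
  · intro l hl
    exact flatten_splitLengths_sortedParts (mem_orderings.1 (mem_filter.1 hl).1)
  · intro bs hbs
    rw [← (mem_filter.1 hbs).2]
    exact List.splitLengths_map_length_flatten bs

theorem card_image_scheduleOf_mul_prod (P : n.Partition) :
    #((orderings n).image (scheduleOf P)) * ∏ j ∈ Icc 1 n, (P.parts.count j)! = n ! := by
  rw [← card_orderings, card_eq_sum_card_fiberwise fun l hl => mem_image_of_mem (scheduleOf P) hl,
    ← smul_eq_mul, ← sum_const]
  refine sum_congr rfl fun μ hμ => ?_
  obtain ⟨l₀, hl₀, rfl⟩ := mem_image.1 hμ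
  exact (card_filter_scheduleOf_eq (mem_orderings.1 hl₀)).symm

theorem setOf_isBP_eq :
    {μ | IsBP n μ} =
      ↑(univ.biUnion fun P : n.Partition => (orderings n).image (scheduleOf P)) := by
  ext μ
  simp only [Set.mem_ofPred_eq, coe_biUnion, coe_univ, Set.mem_univ, Set.iUnion_true,
    Set.mem_iUnion, coe_image, Set.mem_image, mem_coe]
  refine ⟨exists_scheduleOf_eq, ?_⟩
  rintro ⟨P, l, hl, rfl⟩
  exact isBP_scheduleOf (mem_orderings.1 hl)

open Function in
theorem pairwise_disjoint_image_scheduleOf :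
    Pairwise (Disjoint on fun P : n.Partition => (orderings n).image (scheduleOf P)) := by
  intro P Q hPQ
  simp only [Function.onFun, Finset.disjoint_left, mem_image]
  rintro _ ⟨l, hl, rfl⟩ ⟨l', hl', hQ⟩
  refine hPQ (Nat.Partition.ext ?_)
  rw [← map_length_scheduleOf (mem_orderings.1 hl), ← hQ,
    map_length_scheduleOf (mem_orderings.1 hl')]

end Schedules

theorem card_bp_general (n : ℕ) :
    {μ : Finset (List (Fin n)) | IsBP n μ}.ncard =
      ∑ P : Nat.Partition n, n ! / ∏ j ∈ Finset.Icc 1 n, (P.parts.count j)! := by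
  rw [setOf_isBP_eq, Set.ncard_coe_finset,
    card_biUnion (pairwise_disjoint_image_scheduleOf.set_pairwise _)]
  refine sum_congr rfl fun P _ => ?_
  rw [← card_image_scheduleOf_mul_prod P,
    Nat.mul_div_cancel _ (prod_pos fun j _ => factorial_pos _)]

/-- The number of block-parallel update schedules of size `n` is
`Σ_{λ ⊢ n} n! / ∏_j m_λ(j)!` (the product over part sizes `j`; factors with
`m_λ(j) = 0` contribute `0! = 1`, so we may take the product over `1 ≤ j ≤ n`). -/
theorem card_bp (n : ℕ) (hn : 1 ≤ n) :
    {μ : Finset (List (Fin n)) | IsBP n μ}.ncard =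
      ∑ P : Nat.Partition n, n ! / ∏ j ∈ Finset.Icc 1 n, (P.parts.count j)! :=
  card_bp_general n
end

section
/- For every n ≥ 1, the number of equivalence classes of block-parallel update schedules of size n under the relation ≡_0 (where μ ≡_0 μ' iff φ(μ) = φ(μ')) is |BP_n / ≡_0| = Σ_{λ ⊢ n} n! / ∏_{j=1}^{d(λ)} (m_λ(j)!)^j, the sum ranging over all integer partitions λ of n. -/
open Finset Nat

/-!
Call `g : Fin n → ℕ × ℕ` a position map of `μ` if `g i = (|S|, p)` whenever `i` sits at
position `p` of the o-block `S`. The block `W_t` consists of the `i` with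
`t ≡ (g i).2 mod (g i).1`, so `φ(μ)` depends only on `g`; conversely, the residue class
`{t < ℓ | t ≡ p mod j}` determines `(j, p)`, so `φ(μ)` determines `g`. The position maps of
schedules with o-block lengths `λ` are exactly the maps whose fibre over `(j, p)` has `m_λ(j)`
elements for `p < j` and is empty otherwise. These maps form one orbit of `Sym(n)` acting by
precomposition, with stabiliser of order `∏_j (m_λ(j)!)^j`.
-/

section FiberCard

open Equiv MulAction

variable {α β : Type*} [Fintype α] [DecidableEq β]

lemma orbit_domMulAct_eq (f : α → β) :
    orbit (Perm α)ᵈᵐᵃ f = {g | ∀ b, #{a | g a = b} = #{a | f a = b}} := by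
  ext g
  simp only [Set.mem_ofPred_eq, ← Fintype.card_subtype]
  constructor
  · rintro ⟨σ, rfl⟩ b
    exact Fintype.card_congr ((DomMulAct.mk.symm σ).subtypeEquiv fun _ => Iff.rfl)
  · intro h
    have e : ∀ b, {a // g a = b} ≃ {a // f a = b} := fun b => Fintype.equivOfCardEq (h b)
    exact ⟨DomMulAct.mk (ofFiberEquiv e), funext (ofFiberEquiv_map e)⟩

lemma finite_setOf_card_fiber_eq (c : β → ℕ) :
    {f : α → β | ∀ b, #{a | f a = b} = c b}.Finite := by
  rcases Set.eq_empty_or_nonempty {f : α → β | ∀ b, #{a | f a = b} = c b} with h | ⟨f, hf⟩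
  · exact h ▸ Set.finite_empty
  · have : Finite (Perm α)ᵈᵐᵃ := .of_equiv _ DomMulAct.mk
    have hc : c = fun b => #{a | f a = b} := funext fun b => (hf b).symm
    exact hc ▸ orbit_domMulAct_eq f ▸ Finite.finite_mulAction_orbit f

lemma exists_card_fiber_eq (s : Finset β) (c : β → ℕ) (hc : ∀ b ∉ s, c b = 0)
    (hsum : ∑ b ∈ s, c b = Fintype.card α) : ∃ f : α → β, ∀ b, #{a | f a = b} = c b := by
  let e : α ≃ Σ b : s, Fin (c b) :=
    Fintype.equivOfCardEq (by simp [← hsum, ← Finset.sum_coe_sort s])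
  refine ⟨fun a => (e a).1, fun b => ?_⟩
  rw [← Fintype.card_subtype,
    Fintype.card_congr (e.subtypeEquiv (q := fun x => (x.1 : β) = b) fun _ => Iff.rfl)]
  by_cases hb : b ∈ s
  · rw [Fintype.card_congr ((subtypeEquivRight fun x => Subtype.ext_iff.symm).trans
      (sigmaSubtype (⟨b, hb⟩ : s))), Fintype.card_fin]
  · rw [hc b hb, Fintype.card_eq_zero_iff]
    exact ⟨fun x => hb (x.2 ▸ x.1.1.2)⟩

variable [DecidableEq α]

lemma ncard_orbit_domMulAct_mul (f : α → β) :
    (orbit (Perm α)ᵈᵐᵃ f).ncard * ∏ b ∈ univ.image f, (#{a | f a = b})! =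
      (Fintype.card α)! := by
  have hstab : Nat.card (stabilizer (Perm α)ᵈᵐᵃ f) = ∏ b ∈ univ.image f, (#{a | f a = b})! := by
    rw [Nat.card_congr (subtypeEquiv (q := fun σ : Perm α => f ∘ σ = f) DomMulAct.mk.symm
        fun _ => DomMulAct.mem_stabilizer_iff),
      Nat.card_eq_fintype_card, DomMulAct.stabilizer_card']
    simp only [Fintype.card_subtype]
  rw [← hstab, ← index_stabilizer, Subgroup.index_mul_card,
    ← Nat.card_congr (DomMulAct.mk : Perm α ≃ _), Nat.card_eq_fintype_card, Fintype.card_perm]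

theorem ncard_setOf_card_fiber_eq (s : Finset β) (c : β → ℕ) (hc : ∀ b ∉ s, c b = 0)
    (hsum : ∑ b ∈ s, c b = Fintype.card α) :
    {f : α → β | ∀ b, #{a | f a = b} = c b}.ncard = Nat.multinomial s c := by
  obtain ⟨f, hf⟩ := exists_card_fiber_eq s c hc hsum
  have hprod : ∏ b ∈ univ.image f, (#{a | f a = b})! = ∏ b ∈ s, (c b)! := by
    have hfiber : ∀ b, b ∉ univ.image f → c b = 0 := fun b hb => by
      rw [← hf, Finset.card_eq_zero, filter_eq_empty_iff]
      exact fun a _ h => hb (h ▸ mem_image_of_mem f (mem_univ a))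
    simp only [hf]
    refine prod_subset (fun b hb => ?_) (fun b _ hb => by rw [hfiber b hb, factorial_zero])
    obtain ⟨a, -, rfl⟩ := mem_image.1 hb
    by_contra h
    have : 0 < c (f a) := hf (f a) ▸ card_pos.2 ⟨a, by simp⟩
    exact this.ne' (hc _ h)
  have hpos : 0 < ∏ b ∈ s, (c b)! := prod_pos fun b _ => factorial_pos _
  apply Nat.eq_of_mul_eq_mul_right hpos
  have hcf : c = fun b => #{a | f a = b} := funext fun b => (hf b).symm
  rw [hcf, ← orbit_domMulAct_eq, ← hcf, ← hprod, ncard_orbit_domMulAct_mul, hprod, mul_comm,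
    Nat.multinomial_spec, hsum]

end FiberCard

lemma eq_of_forall_mod_eq_iff {L j j' p p' : ℕ} (hL : 0 < L) (hj : j ∣ L) (hj' : j' ∣ L)
    (hp : p < j) (hp' : p' < j') (h : ∀ t < L, t % j = p ↔ t % j' = p') : j = j' ∧ p = p' := by
  have hjL := Nat.le_of_dvd hL hj
  have hj'L := Nat.le_of_dvd hL hj'
  have h1 : p % j' = p' := (h p (by omega)).1 (Nat.mod_eq_of_lt hp)
  have h2 : p' % j = p := (h p' (by omega)).2 (Nat.mod_eq_of_lt hp')
  obtain rfl : p = p' := le_antisymm (h2 ▸ Nat.mod_le _ _) (h1 ▸ Nat.mod_le _ _)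
  -- `(p + a) % L` lies in the residue class of `p` mod `a`, hence in that mod `b`, so `b ∣ a`.
  have hdvd : ∀ a b, a ∣ L → b ∣ L → p < a → p < b → (∀ t < L, t % a = p → t % b = p) →
      b ∣ a := by
    intro a b ha hb hpa hpb hab
    have hmod := hab _ (Nat.mod_lt _ hL) (by rw [Nat.mod_mod_of_dvd _ ha, Nat.add_mod_right,
      Nat.mod_eq_of_lt hpa])
    rw [Nat.mod_mod_of_dvd _ hb] at hmod
    have : p + a ≡ p + 0 [MOD b] := by rw [Nat.ModEq, hmod, add_zero, Nat.mod_eq_of_lt hpb]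
    exact Nat.modEq_zero_iff_dvd.1 (Nat.ModEq.add_left_cancel' p this)
  exact ⟨Nat.dvd_antisymm (hdvd j' j hj' hj hp' hp fun t ht => (h t ht).2)
    (hdvd j j' hj hj' hp hp' fun t ht => (h t ht).1), rfl⟩

lemma range_filter_lt {n j : ℕ} (hj : j ≤ n) : (range n).filter (· < j) = range j := by
  ext p
  simp only [mem_filter, mem_range]
  omega

section Lists

variable {α : Type*}

lemma sum_count_eq_one_iff [DecidableEq α] {μ : Finset (List α)} {i : α} :
    ∑ S ∈ μ, S.count i = 1 ↔ (∀ S ∈ μ, S.count i ≤ 1) ∧ ∃! S, S ∈ μ ∧ i ∈ S := by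
  constructor
  · intro h
    have hle : ∀ S ∈ μ, S.count i ≤ 1 := fun S hS =>
      h ▸ single_le_sum (fun T _ => Nat.zero_le (T.count i)) hS
    obtain ⟨S, hS, hiS⟩ := exists_ne_zero_of_sum_ne_zero (h ▸ one_ne_zero)
    refine ⟨hle, S, ⟨hS, List.count_pos_iff.1 (Nat.pos_of_ne_zero hiS)⟩, ?_⟩
    rintro T ⟨hT, hiT⟩
    by_contra hTS
    have h2 : ∑ U ∈ {T, S}, U.count i ≤ ∑ U ∈ μ, U.count i :=
      sum_le_sum_of_subset (insert_subset hT (singleton_subset_iff.2 hS))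
    rw [sum_pair hTS, h] at h2
    have := List.count_pos_iff.2 hiT
    omega
  · rintro ⟨hle, S, ⟨hS, hiS⟩, huniq⟩
    rw [sum_eq_single_of_mem S hS fun T hT hTS =>
      List.count_eq_zero.2 fun hiT => hTS (huniq T ⟨hT, hiT⟩)]
    exact le_antisymm (hle S hS) (List.count_pos_iff.2 hiS)

def IsPosMap (μ : Finset (List α)) (g : α → ℕ × ℕ) : Prop :=
  ∀ S ∈ μ, ∀ (p : ℕ) (hp : p < S.length), g S[p] = (S.length, p)

lemma IsPosMap.nodup {μ : Finset (List α)} {g : α → ℕ × ℕ} (hg : IsPosMap μ g) {S : List α}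
    (hS : S ∈ μ) : S.Nodup := by
  refine List.nodup_iff_injective_get.2 fun p q hpq => Fin.ext ?_
  exact congrArg Prod.snd ((hg S hS p p.2).symm.trans ((congrArg g hpq).trans (hg S hS q q.2)))

end Lists

section Schedules

variable {n : ℕ} {μ : Finset (List (Fin n))} {g : Fin n → ℕ × ℕ}

theorem isBP_iff :
    IsBP n μ ↔ (∀ S ∈ μ, S ≠ []) ∧ (∀ S ∈ μ, S.Nodup) ∧ ∀ i, ∃! S, S ∈ μ ∧ i ∈ S := by
  simp only [IsBP, sum_count_eq_one_iff, forall_and, List.nodup_iff_count_le_one]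
  constructor
  · rintro ⟨h1, h2, h3⟩
    exact ⟨h1, fun S hS i => h2 i S hS, h3⟩
  · rintro ⟨h1, h2, h3⟩
    exact ⟨h1, fun i S hS => h2 S hS i, h3⟩

def phiOfPosMap (g : Fin n → ℕ × ℕ) : List (Finset (Fin n)) :=
  (List.range (univ.lcm fun i => (g i).1)).map fun t => ({i | t % (g i).1 = (g i).2} : Finset _)

/-- The number of elements at position `p` of an o-block of length `j`, for a schedule
whose o-block lengths form the partition `P`. -/
def slotCount (P : n.Partition) (b : ℕ × ℕ) : ℕ :=
  if b.2 < b.1 then P.parts.count b.1 else 0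

namespace IsBP

variable (h : IsBP n μ)
include h

lemma nodup {S : List (Fin n)} (hS : S ∈ μ) : S.Nodup :=
  (isBP_iff.1 h).2.1 S hS

lemma exists_mem (i : Fin n) : ∃ S ∈ μ, i ∈ S :=
  ((isBP_iff.1 h).2.2 i).exists

lemma eq_of_mem_s5 {S T : List (Fin n)} {i : Fin n} (hS : S ∈ μ) (hT : T ∈ μ) (hiS : i ∈ S)
    (hiT : i ∈ T) : S = T :=
  ((isBP_iff.1 h).2.2 i).unique ⟨hS, hiS⟩ ⟨hT, hiT⟩

lemma exists_isPosMap : ∃ g, IsPosMap μ g := by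
  choose S hS using h.exists_mem
  refine ⟨fun i => ((S i).length, (S i).idxOf i), fun T hT p hp => ?_⟩
  have hST : S T[p] = T := h.eq_of_mem_s5 (hS _).1 hT (hS _).2 (List.getElem_mem hp)
  simp only [hST, (h.nodup hT).idxOf_getElem]

lemma exists_getElem_eq (hg : IsPosMap μ g) (i : Fin n) :
    ∃ S ∈ μ, ∃ (p : ℕ) (hp : p < S.length), S[p] = i ∧ g i = (S.length, p) := by
  obtain ⟨S, hS, hiS⟩ := h.exists_mem i
  obtain ⟨p, hp, rfl⟩ := List.getElem_of_mem hiS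
  exact ⟨S, hS, p, hp, rfl, hg S hS p hp⟩

lemma blockAt_eq (hg : IsPosMap μ g) (t : ℕ) :
    blockAt μ t = ({i | t % (g i).1 = (g i).2} : Finset _) := by
  ext x
  simp only [blockAt, mem_biUnion, Option.mem_toFinset, Option.mem_def,
    List.getElem?_eq_some_iff, mem_filter, mem_univ, true_and]
  constructor
  · rintro ⟨S, hS, hlt, rfl⟩
    simp [hg S hS _ hlt]
  · intro hx
    obtain ⟨S, hS, p, hp, rfl, hgx⟩ := h.exists_getElem_eq hg x
    rw [hgx] at hx
    exact ⟨S, hS, Nat.mod_lt _ (by omega), by simp only [hx]⟩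

lemma bpLen_eq (hg : IsPosMap μ g) : bpLen μ = univ.lcm fun i => (g i).1 := by
  apply Nat.dvd_antisymm
  · refine Finset.lcm_dvd fun S hS => ?_
    have hp : 0 < S.length := List.length_pos_iff.2 (h.1 S hS)
    have hS0 : (g S[0]).1 = S.length := by rw [hg S hS 0 hp]
    exact hS0 ▸ Finset.dvd_lcm (mem_univ S[0])
  · refine Finset.lcm_dvd fun i _ => ?_
    obtain ⟨S, hS, p, hp, -, hgi⟩ := h.exists_getElem_eq hg i
    exact (congrArg Prod.fst hgi) ▸ Finset.dvd_lcm hS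

theorem phiBP_eq_phiOfPosMap (hg : IsPosMap μ g) : phiBP μ = phiOfPosMap g := by
  rw [phiBP, phiOfPosMap, h.bpLen_eq hg]
  exact List.map_congr_left fun t _ => h.blockAt_eq hg t

lemma sum_length : ∑ S ∈ μ, S.length = n := by
  calc ∑ S ∈ μ, S.length = ∑ S ∈ μ, ∑ i, S.count i := by
        refine sum_congr rfl fun S _ => ?_
        simpa using (Multiset.sum_count_eq_card (s := univ) (m := (S : Multiset (Fin n)))
          fun a _ => mem_univ a).symm
    _ = n := by rw [sum_comm, sum_congr rfl fun i _ => h.2 i]; simp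

def shape : n.Partition where
  parts := μ.val.map List.length
  parts_pos hj := by
    obtain ⟨S, hS, rfl⟩ := Multiset.mem_map.1 hj
    exact List.length_pos_iff.2 (h.1 S hS)
  parts_sum := h.sum_length

lemma card_fiber (hg : IsPosMap μ g) (b : ℕ × ℕ) : #{i | g i = b} = slotCount h.shape b := by
  obtain ⟨j, p⟩ := b
  simp only [slotCount, shape, Multiset.count_map]
  split_ifs with hpj
  · rw [← Finset.filter_val, Finset.card_val]
    refine (card_bij (fun S hS => S[p]'((mem_filter.1 hS).2 ▸ hpj)) ?_ ?_ ?_).symm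
    · intro S hS
      obtain ⟨hS, hj⟩ := mem_filter.1 hS
      simp [hg S hS p (hj ▸ hpj), hj]
    · intro S hS T hT hST
      exact h.eq_of_mem_s5 (mem_filter.1 hS).1 (mem_filter.1 hT).1 (List.getElem_mem _)
        (hST.symm ▸ List.getElem_mem _)
    · intro i hi
      obtain ⟨S, hS, q, hq, rfl, hgi⟩ := h.exists_getElem_eq hg i
      obtain ⟨hj, hp⟩ := Prod.ext_iff.1 ((mem_filter.1 hi).2.symm.trans hgi)
      subst hp
      exact ⟨S, mem_filter.2 ⟨hS, hj⟩, rfl⟩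
  · refine card_eq_zero.2 (filter_eq_empty_iff.2 fun i _ hgi => hpj ?_)
    obtain ⟨S, hS, q, hq, rfl, hgS⟩ := h.exists_getElem_eq hg i
    rw [hgi] at hgS
    simp only [Prod.ext_iff] at hgS
    omega

end IsBP

theorem phiOfPosMap_injOn : Set.InjOn phiOfPosMap {g : Fin n → ℕ × ℕ | ∀ i, (g i).2 < (g i).1} := by
  intro g hg g' hg' heq
  have hL : 0 < univ.lcm fun i => (g i).1 := Nat.pos_of_ne_zero fun h0 => by
    obtain ⟨i, -, hi⟩ := Finset.lcm_eq_zero_iff.1 h0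
    exact absurd hi (hg i).ne_bot
  have hlen : (univ.lcm fun i => (g i).1) = univ.lcm fun i => (g' i).1 := by
    simpa [phiOfPosMap] using congrArg List.length heq
  funext i
  have hiff : ∀ t < univ.lcm fun i => (g i).1, t % (g i).1 = (g i).2 ↔ t % (g' i).1 = (g' i).2 := by
    intro t ht
    have := congrArg (·[t]?) heq
    simp only [phiOfPosMap, List.getElem?_map, List.getElem?_range ht,
      List.getElem?_range (hlen ▸ ht), Option.map_some, Option.some.injEq] at this
    simpa using Finset.ext_iff.1 this i
  obtain ⟨h1, h2⟩ := eq_of_forall_mod_eq_iff hL (Finset.dvd_lcm (mem_univ i))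
    (hlen ▸ Finset.dvd_lcm (mem_univ i)) (hg i) (hg' i) hiff
  exact Prod.ext h1 h2

section Construction

variable (g) in
noncomputable def slotList (b : ℕ × ℕ) : List (Fin n) :=
  ({i | g i = b} : Finset _).sort (· ≤ ·)

variable (g) in
noncomputable def slotRank (i : Fin n) : ℕ :=
  (slotList g (g i)).idxOf i

variable (g) in
/-- The o-block through `i` takes, at each position `q`, the element of the same rank as `i`
among those sent to `((g i).1, q)`. -/
noncomputable def slotBlock (i : Fin n) : List (Fin n) :=
  (List.range (g i).1).map fun q => (slotList g ((g i).1, q)).getD (slotRank g i) i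

lemma mem_slotList {b : ℕ × ℕ} {i : Fin n} : i ∈ slotList g b ↔ g i = b := by
  simp [slotList]

lemma length_slotList (hbal : ∀ j p, p < j → #{i | g i = (j, p)} = #{i | g i = (j, 0)})
    {b : ℕ × ℕ} (hb : b.2 < b.1) : (slotList g b).length = #{i | g i = (b.1, 0)} := by
  rw [slotList, length_sort, ← hbal _ _ hb]

lemma slotBlock_getD_self (i : Fin n) : (slotList g (g i)).getD (slotRank g i) i = i := by
  have hk : slotRank g i < (slotList g (g i)).length :=
    List.idxOf_lt_length_iff.2 (mem_slotList.2 rfl)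
  rw [List.getD_eq_getElem _ _ hk]
  exact List.getElem_idxOf hk

variable (hlt : ∀ i, (g i).2 < (g i).1)
  (hbal : ∀ j p, p < j → #{i | g i = (j, p)} = #{i | g i = (j, 0)})
include hlt hbal

lemma slotRank_lt_length (i : Fin n) {q : ℕ} (hq : q < (g i).1) :
    slotRank g i < (slotList g ((g i).1, q)).length := by
  rw [length_slotList hbal hq, ← length_slotList hbal (hlt i)]
  exact List.idxOf_lt_length_iff.2 (mem_slotList.2 rfl)

lemma slotBlock_getD (i : Fin n) {q : ℕ} (hq : q < (g i).1) :
    g ((slotList g ((g i).1, q)).getD (slotRank g i) i) = ((g i).1, q) ∧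
      slotBlock g ((slotList g ((g i).1, q)).getD (slotRank g i) i) = slotBlock g i := by
  have hk := slotRank_lt_length hlt hbal i hq
  rw [List.getD_eq_getElem _ _ hk]
  set e := (slotList g ((g i).1, q))[slotRank g i]
  have hge : g e = ((g i).1, q) := mem_slotList.1 (List.getElem_mem hk)
  have hrank : slotRank g e = slotRank g i := by
    rw [slotRank, hge]
    exact (sort_nodup _ _).idxOf_getElem _ hk
  refine ⟨hge, ?_⟩
  rw [slotBlock, slotBlock, hge, hrank]
  refine List.map_congr_left fun q' hq' => ?_
  have hk' := slotRank_lt_length hlt hbal i (List.mem_range.1 hq')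
  rw [List.getD_eq_getElem _ _ hk', List.getD_eq_getElem _ _ hk']

lemma mem_slotBlock_iff {x i : Fin n} : x ∈ slotBlock g i ↔ slotBlock g x = slotBlock g i := by
  constructor
  · intro hx
    obtain ⟨q, hq, rfl⟩ := List.mem_map.1 hx
    exact (slotBlock_getD hlt hbal i (List.mem_range.1 hq)).2
  · intro hx
    rw [← hx]
    exact List.mem_map.2 ⟨(g x).2, List.mem_range.2 (hlt x), slotBlock_getD_self x⟩

lemma isPosMap_image_slotBlock : IsPosMap (univ.image (slotBlock g)) g := by
  intro T hT p hp
  obtain ⟨i, -, rfl⟩ := mem_image.1 hT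
  simp only [slotBlock, List.length_map, List.length_range, List.getElem_map,
    List.getElem_range] at hp ⊢
  exact (slotBlock_getD hlt hbal i hp).1

theorem exists_isBP_isPosMap_of_balanced : ∃ μ, IsBP n μ ∧ IsPosMap μ g := by
  have hg := isPosMap_image_slotBlock hlt hbal
  refine ⟨univ.image (slotBlock g), isBP_iff.2 ⟨?_, fun S hS => hg.nodup hS, fun i => ?_⟩, hg⟩
  · intro T hT
    obtain ⟨i, -, rfl⟩ := mem_image.1 hT
    exact List.ne_nil_of_length_pos (by simpa [slotBlock] using (Nat.zero_le _).trans_lt (hlt i))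
  · refine ⟨slotBlock g i, ⟨mem_image_of_mem _ (mem_univ i), (mem_slotBlock_iff hlt hbal).2 rfl⟩,
      fun T ⟨hT, hiT⟩ => ?_⟩
    obtain ⟨x, -, rfl⟩ := mem_image.1 hT
    exact ((mem_slotBlock_iff hlt hbal).1 hiT).symm

end Construction

lemma snd_lt_fst_of_card_fiber {P : n.Partition} (hP : ∀ b, #{i | g i = b} = slotCount P b)
    (i : Fin n) : (g i).2 < (g i).1 := by
  have : 0 < slotCount P (g i) := hP (g i) ▸ card_pos.2 ⟨i, by simp⟩
  by_contra hcon
  simp [slotCount, hcon] at this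

theorem exists_isBP_isPosMap_iff :
    (∃ μ, IsBP n μ ∧ IsPosMap μ g) ↔ ∃ P : n.Partition, ∀ b, #{i | g i = b} = slotCount P b := by
  constructor
  · rintro ⟨μ, h, hg⟩
    exact ⟨h.shape, h.card_fiber hg⟩
  · rintro ⟨P, hP⟩
    refine exists_isBP_isPosMap_of_balanced (snd_lt_fst_of_card_fiber hP) fun j p hp => ?_
    rw [hP, hP]
    simp [slotCount, hp, (Nat.zero_le p).trans_lt hp]

lemma slotCount_injective : Function.Injective (slotCount (n := n)) := by
  intro P Q h
  refine Nat.Partition.ext (Multiset.ext.2 fun j => ?_)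
  rcases Nat.eq_zero_or_pos j with rfl | hj
  · rw [Multiset.count_eq_zero.2 fun h => (P.parts_pos h).false,
      Multiset.count_eq_zero.2 fun h => (Q.parts_pos h).false]
  · simpa [slotCount, hj] using congrFun h (j, 0)

lemma slotCount_eq_zero (P : n.Partition) {b : ℕ × ℕ} (hb : b ∉ Icc 1 n ×ˢ range n) :
    slotCount P b = 0 := by
  unfold slotCount
  split_ifs with hlt
  · refine Multiset.count_eq_zero.2 fun hm => hb (mem_product.2 ⟨?_, ?_⟩)
    · exact mem_Icc.2 ⟨P.parts_pos hm, P.le_of_mem_parts hm⟩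
    · exact mem_range.2 (hlt.trans_le (P.le_of_mem_parts hm))
  · rfl

lemma sum_slotCount (P : n.Partition) : ∑ b ∈ Icc 1 n ×ˢ range n, slotCount P b = n := by
  rw [sum_product]
  calc ∑ j ∈ Icc 1 n, ∑ p ∈ range n, slotCount P (j, p)
      = ∑ j ∈ Icc 1 n, P.parts.count j • j := sum_congr rfl fun j hj => by
        simp only [slotCount, ← sum_filter, range_filter_lt (mem_Icc.1 hj).2, sum_const,
          card_range, smul_eq_mul, mul_comm]
    _ = n := by
      rw [← Finset.sum_multiset_count_of_subset, P.parts_sum]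
      intro j hj
      have hj := Multiset.mem_toFinset.1 hj
      exact mem_Icc.2 ⟨P.parts_pos hj, P.le_of_mem_parts hj⟩

lemma prod_factorial_slotCount (P : n.Partition) :
    ∏ b ∈ Icc 1 n ×ˢ range n, (slotCount P b)! = ∏ j ∈ Icc 1 n, (P.parts.count j)! ^ j := by
  rw [prod_product]
  refine prod_congr rfl fun j hj => ?_
  simp only [slotCount, apply_ite, factorial_zero, ← prod_filter,
    range_filter_lt (mem_Icc.1 hj).2, prod_const, card_range]

theorem setOf_phiBP_eq_image :
    {L | ∃ μ, IsBP n μ ∧ phiBP μ = L} =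
      phiOfPosMap '' ⋃ P : n.Partition, {g | ∀ b, #{i | g i = b} = slotCount P b} := by
  ext L
  simp only [Set.mem_ofPred_eq, Set.mem_image, Set.mem_iUnion, ← exists_isBP_isPosMap_iff]
  constructor
  · rintro ⟨μ, h, rfl⟩
    obtain ⟨g, hg⟩ := h.exists_isPosMap
    exact ⟨g, ⟨μ, h, hg⟩, (h.phiBP_eq_phiOfPosMap hg).symm⟩
  · rintro ⟨g, ⟨μ, h, hg⟩, rfl⟩
    exact ⟨μ, h, h.phiBP_eq_phiOfPosMap hg⟩

end Schedules

theorem card_bp_mod_eqzero_general (n : ℕ) :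
    {L : List (Finset (Fin n)) | ∃ μ : Finset (List (Fin n)), IsBP n μ ∧ phiBP μ = L}.ncard =
      ∑ P : Nat.Partition n, n ! / ∏ j ∈ Finset.Icc 1 n, ((P.parts.count j)!) ^ j := by
  set F : n.Partition → Set (Fin n → ℕ × ℕ) := fun P => {g | ∀ b, #{i | g i = b} = slotCount P b}
  have hinj : Set.InjOn phiOfPosMap (⋃ P, F P) := phiOfPosMap_injOn.mono fun g hg => by
    obtain ⟨P, hP⟩ := Set.mem_iUnion.1 hg
    exact snd_lt_fst_of_card_fiber hP
  have hdisj : Pairwise fun P Q => Disjoint (F P) (F Q) := fun P Q hPQ =>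
    Set.disjoint_left.2 fun g hP hQ =>
      hPQ (slotCount_injective (funext fun b => (hP b).symm.trans (hQ b)))
  rw [setOf_phiBP_eq_image, hinj.ncard_image,
    Set.ncard_iUnion_of_finite (fun P => finite_setOf_card_fiber_eq _) hdisj,
    finsum_eq_sum_of_fintype]
  refine sum_congr rfl fun P _ => ?_
  rw [ncard_setOf_card_fiber_eq _ _ (fun b => slotCount_eq_zero P) (by simp [sum_slotCount]),
    Nat.multinomial, sum_slotCount, prod_factorial_slotCount]

/-- The number of equivalence classes of block-parallel update schedules of size `n`
under `≡₀` (where `μ ≡₀ μ'` iff `φ(μ) = φ(μ')`), i.e. the number of distinct values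
of `φ` on `BP_n`, equals `Σ_{λ ⊢ n} n! / ∏_j (m_λ(j)!)^j`. -/
theorem card_bp_mod_eqzero (n : ℕ) (hn : 1 ≤ n) :
    {L : List (Finset (Fin n)) | ∃ μ : Finset (List (Fin n)), IsBP n μ ∧ phiBP μ = L}.ncard =
      ∑ P : Nat.Partition n, n ! / ∏ j ∈ Finset.Icc 1 n, ((P.parts.count j)!) ^ j :=
  card_bp_mod_eqzero_general n
end

section
/- For any two block-parallel update schedules μ, μ' ∈ BP_n, the following are equivalent: (i) μ ≡_⋆ μ', i.e., φ(μ) = σ^i(φ(μ')) for some cyclic shift i ∈ {0,…,|φ(μ')|−1}; (ii) for every automata network f of size n over arbitrary finite nonempty alphabets X_0,…,X_{n−1} (f : X → X on X = ∏_i X_i, given componentwise), the restrictions of f^{⟨μ⟩} and f^{⟨μ'⟩} to their respective limit sets are isomorphic, i.e., there is a bijection π : Ω_{f^{⟨μ⟩}} → Ω_{f^{⟨μ'⟩}} such that π ∘ f^{⟨μ⟩} = f^{⟨μ'⟩} ∘ π on Ω_{f^{⟨μ⟩}}. -/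
/-!
(⇒) If `φ(μ') = U ++ V` and `φ(μ) = V ++ U`, then `f^⟨μ'⟩ = g_V ∘ g_U` and `f^⟨μ⟩ = g_U ∘ g_V`,
and for any maps `u, v` of a finite set, `u` maps `Ω(v ∘ u)` bijectively onto `Ω(u ∘ v)` and
intertwines the two maps.

(⇐) Let `L = |φ(μ')|` and extend the blocks of `μ'` `L`-periodically to integer times. The clock
configuration of a time `t` records in every automaton, modulo `2L`, the last time before `t` at
which `μ'` updates it. In the clock network, an automaton updated in the clock configuration of a
time at which `μ'` updates it records that time, and in any other configuration it writes `none`.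
Under `μ'` the clock configuration of time `0` is periodic and the all-`none` configuration is
fixed, so the limit set has two points; hence so has the limit set under `μ`, which therefore
contains some `x ≠ none`. Under `μ`, `none` spreads to every automaton within one period, so by
injectivity on the limit set the run from `x` never produces `none`. Every configuration of this
run is then a clock configuration, its time advances by one per substep, and `μ` updates exactly
the automata that `μ'` updates at that time: `μ` is `μ'` shifted in time.
-/

open Finset Nat

/-- Update of the automata in block `W`, over arbitrary alphabets `X i`. -/
def blockUpdateG {n : ℕ} {X : Fin n → Type} (f : ∀ i, (∀ j, X j) → X i)
    (W : Finset (Fin n)) (x : ∀ j, X j) : ∀ j, X j :=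
  fun i => if i ∈ W then f i x else x i

/-- Sequential application of a list of block updates (leftmost block first). -/
def seqUpdateG {n : ℕ} {X : Fin n → Type} (f : ∀ i, (∀ j, X j) → X i)
    (Ws : List (Finset (Fin n))) (x : ∀ j, X j) : ∀ j, X j :=
  Ws.foldl (fun y W => blockUpdateG f W y) x

/-- The block-parallel dynamics `f^⟨μ⟩ = f^{(W_{ℓ−1})} ∘ ⋯ ∘ f^{(W_0)}`. -/
def bpUpdateG {n : ℕ} {X : Fin n → Type} (f : ∀ i, (∀ j, X j) → X i)
    (μ : Finset (List (Fin n))) : (∀ j, X j) → (∀ j, X j) :=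
  seqUpdateG f (phiBP μ)

/-- The limit set `Ω_g = ⋂_{t ∈ ℕ} g^t(X)` of `g : X → X`. -/
def limitSet {Y : Type} (g : Y → Y) : Set Y :=
  ⋂ t : ℕ, Set.range g^[t]

def LimitIsomorphic {Y : Type} (g g' : Y → Y) : Prop :=
  ∃ π : Y → Y, Set.BijOn π (limitSet g) (limitSet g') ∧
    ∀ x ∈ limitSet g, π (g x) = g' (π x)

theorem Function.Semiconj.mapsTo_limitSet {Y : Type} {u g g' : Y → Y} (h : Semiconj u g g') :
    Set.MapsTo u (limitSet g) (limitSet g') := by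
  intro x hx
  refine Set.mem_iInter.2 fun t => ?_
  obtain ⟨y, rfl⟩ := Set.mem_iInter.1 hx t
  exact ⟨u y, (h.iterate_right t y).symm⟩

section LimitSet

variable {Y : Type} {g : Y → Y}

theorem antitone_range_iterate : Antitone fun m => Set.range g^[m] := by
  intro a b h
  obtain ⟨c, rfl⟩ := Nat.exists_eq_add_of_le h
  rintro _ ⟨y, rfl⟩
  exact ⟨g^[c] y, by rw [← Function.iterate_add_apply, Nat.add_comm]⟩

theorem Function.IsPeriodicPt.mem_limitSet {P : ℕ} {x : Y} (hx : IsPeriodicPt g P x)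
    (hP : 0 < P) : x ∈ limitSet g :=
  Set.mem_iInter.2 fun t =>
    antitone_range_iterate (Nat.le_mul_of_pos_left t hP) ⟨x, hx.mul_const t⟩

theorem eventually_range_iterate_eq_limitSet [Finite Y] :
    ∃ N, ∀ m, N ≤ m → Set.range g^[m] = limitSet g := by
  obtain ⟨N, hN⟩ := WellFoundedLT.antitone_chain_condition (antitone_range_iterate (g := g))
  suffices limitSet g = Set.range g^[N] from ⟨N, fun m hm => (hN m hm).symm.trans this.symm⟩
  refine (Set.iInter_subset _ N).antisymm fun x hx => Set.mem_iInter.2 fun m => ?_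
  rcases le_total m N with h | h
  · exact antitone_range_iterate h hx
  · exact hN m h ▸ hx

theorem bijOn_limitSet [Finite Y] : Set.BijOn g (limitSet g) (limitSet g) := by
  have hmaps : Set.MapsTo g (limitSet g) (limitSet g) :=
    Function.Semiconj.mapsTo_limitSet (Function.Commute.refl g)
  refine ((Set.toFinite _).surjOn_iff_bijOn_of_mapsTo hmaps).1 fun y hy => ?_
  obtain ⟨N, hN⟩ := eventually_range_iterate_eq_limitSet (g := g)
  obtain ⟨x, rfl⟩ : y ∈ Set.range g^[N + 1] := hN (N + 1) N.le_succ ▸ hy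
  exact ⟨g^[N] x, hN N le_rfl ▸ ⟨x, rfl⟩, (Function.iterate_succ_apply' g N x).symm⟩

theorem iterate_ne_of_mem_limitSet [Finite Y] {b x : Y} (hb : g b = b) (hx : x ∈ limitSet g)
    (hxb : x ≠ b) (m : ℕ) : g^[m] x ≠ b := fun h =>
  hxb <| (bijOn_limitSet.iterate m).injOn hx
    ((show Function.IsPeriodicPt g 1 b from hb).mem_limitSet one_pos)
    (h.trans (Function.iterate_fixed hb m).symm)

theorem bijOn_limitSet_comp [Finite Y] (u v : Y → Y) :
    Set.BijOn u (limitSet (v ∘ u)) (limitSet (u ∘ v)) := by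
  have hu : Function.Semiconj u (v ∘ u) (u ∘ v) := fun _ => rfl
  have hv : Function.Semiconj v (u ∘ v) (v ∘ u) := fun _ => rfl
  refine ⟨hu.mapsTo_limitSet, fun a ha b hb hab => ?_, fun y hy => ?_⟩
  · exact bijOn_limitSet.injOn ha hb (congrArg v hab)
  · obtain ⟨z, hz, rfl⟩ := bijOn_limitSet.surjOn hy
    exact ⟨v z, hv.mapsTo_limitSet hz, rfl⟩

theorem limitIsomorphic_comp_comm [Finite Y] (u v : Y → Y) :
    LimitIsomorphic (v ∘ u) (u ∘ v) :=
  ⟨u, bijOn_limitSet_comp u v, fun _ _ => rfl⟩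

end LimitSet

section Network

variable {n : ℕ} {X : Fin n → Type} (f : ∀ i, (∀ j, X j) → X i)

theorem seqUpdateG_append (Ws Ws' : List (Finset (Fin n))) :
    seqUpdateG f (Ws ++ Ws') = seqUpdateG f Ws' ∘ seqUpdateG f Ws :=
  funext fun _ => List.foldl_append

theorem limitIsomorphic_seqUpdateG_rotate [∀ i, Finite (X i)] (Ws : List (Finset (Fin n)))
    (k : ℕ) : LimitIsomorphic (seqUpdateG f (Ws.rotate k)) (seqUpdateG f Ws) := by
  rw [List.rotate_eq_drop_append_take_mod, seqUpdateG_append]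
  conv_rhs => rw [← List.take_append_drop (k % Ws.length) Ws, seqUpdateG_append]
  exact limitIsomorphic_comp_comm _ _

end Network

theorem List.two_le_count_of_getElem_eq {α : Type*} [DecidableEq α] {l : List α} {k k' : ℕ}
    (hk : k < l.length) (hk' : k' < l.length) (hne : k ≠ k') (h : l[k] = l[k']) :
    2 ≤ l.count l[k] := by
  rw [← List.duplicate_iff_two_le_count, List.duplicate_iff_exists_distinct_get]
  rcases Nat.lt_or_gt_of_ne hne with hlt | hlt
  · exact ⟨⟨k, hk⟩, ⟨k', hk'⟩, hlt, rfl, h⟩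
  · exact ⟨⟨k', hk'⟩, ⟨k, hk⟩, hlt, h, rfl⟩

section Schedule

variable {n : ℕ} {ν : Finset (List (Fin n))}

theorem mem_blockAt {i : Fin n} {t : ℕ} :
    i ∈ blockAt ν t ↔ ∃ S ∈ ν, S[t % S.length]? = some i := by
  simp [blockAt]

theorem blockAt_congr {t t' : ℕ} (h : t ≡ t' [MOD bpLen ν]) : blockAt ν t = blockAt ν t' :=
  Finset.biUnion_congr rfl fun S hS => by rw [h.of_dvd (Finset.dvd_lcm hS)]

theorem IsBP.bpLen_pos (hν : IsBP n ν) : 0 < bpLen ν := Nat.pos_of_ne_zero fun h => by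
  obtain ⟨S, hS, hlen⟩ := Finset.lcm_eq_zero_iff.1 h
  exact hν.1 S hS (List.length_eq_zero_iff.1 hlen)

theorem IsBP.exists_mem_s10 (hν : IsBP n ν) (i : Fin n) : ∃ S ∈ ν, i ∈ S := by
  by_contra! h
  have hsum := hν.2 i
  rw [Finset.sum_eq_zero fun S hS => List.count_eq_zero.2 (h S hS)] at hsum
  exact zero_ne_one hsum

theorem IsBP.getElem_inj (hν : IsBP n ν) {S S' : List (Fin n)} (hS : S ∈ ν) (hS' : S' ∈ ν)
    {k k' : ℕ} (hk : k < S.length) (hk' : k' < S'.length) (h : S[k] = S'[k']) :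
    S = S' ∧ k = k' := by
  have hsum := hν.2 S[k]
  have hcount : ∀ T ∈ ν, T.count S[k] ≤ 1 := fun T hT =>
    hsum ▸ Finset.single_le_sum (fun _ _ => Nat.zero_le _) hT
  have hSS' : S = S' := by
    by_contra hne
    have hpair := Finset.sum_le_sum_of_subset (f := fun T => T.count S[k])
      (Finset.insert_subset hS (Finset.singleton_subset_iff.2 hS'))
    rw [Finset.sum_pair hne, hsum, h] at hpair
    have h1 := List.count_pos_iff.2 (List.getElem_mem hk')
    have h2 := List.count_pos_iff.2 (h ▸ List.getElem_mem hk)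
    omega
  subst hSS'
  refine ⟨rfl, by_contra fun hne => ?_⟩
  have := List.two_le_count_of_getElem_eq hk hk' hne h
  have := hcount S hS
  omega

theorem blockAt_add_bpLen (t : ℕ) : blockAt ν (t + bpLen ν) = blockAt ν t :=
  blockAt_congr Nat.add_modEq_right

theorem IsBP.blockAt_nonempty [Nonempty (Fin n)] (hν : IsBP n ν) (t : ℕ) :
    (blockAt ν t).Nonempty := by
  obtain ⟨S, hS, h0⟩ := hν.exists_mem_s10 (Classical.arbitrary _)
  have hlt : t % S.length < S.length := Nat.mod_lt _ (List.length_pos_of_mem h0)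
  exact ⟨S[t % S.length], mem_blockAt.2 ⟨S, hS, List.getElem?_eq_getElem hlt⟩⟩

theorem IsBP.exists_mem_blockAt_lt (hν : IsBP n ν) (i : Fin n) :
    ∃ t < bpLen ν, i ∈ blockAt ν t := by
  obtain ⟨S, hS, hi⟩ := hν.exists_mem_s10 i
  obtain ⟨k, hk, rfl⟩ := List.mem_iff_getElem.1 hi
  refine ⟨k, hk.trans_le (Nat.le_of_dvd hν.bpLen_pos (Finset.dvd_lcm hS)),
    mem_blockAt.2 ⟨S, hS, ?_⟩⟩
  rw [Nat.mod_eq_of_lt hk, List.getElem?_eq_getElem hk]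

theorem IsBP.bpLen_dvd_of_periodic (hν : IsBP n ν) {t₀ P : ℕ}
    (h : ∀ t, t₀ ≤ t → blockAt ν (t + P) = blockAt ν t) : bpLen ν ∣ P := by
  refine Finset.lcm_dvd fun S hS => ?_
  have hpos : 0 < S.length := List.length_pos_iff.2 (hν.1 S hS)
  have hS0 : S[0] ∈ blockAt ν (S.length * t₀ + P) := by
    rw [h _ (Nat.le_mul_of_pos_left t₀ hpos), mem_blockAt]
    exact ⟨S, hS, by rw [Nat.mul_mod_right, List.getElem?_eq_getElem hpos]⟩
  obtain ⟨S', hS', hget⟩ := mem_blockAt.1 hS0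
  obtain ⟨hlt, hget⟩ := List.getElem?_eq_some_iff.1 hget
  obtain ⟨rfl, hmod⟩ := hν.getElem_inj hS' hS hlt hpos hget
  exact (Nat.dvd_add_right (Nat.dvd_mul_right _ _)).1 (Nat.dvd_of_mod_eq_zero hmod)

theorem exists_rotate_of_blockAt_eq {μ μ' : Finset (List (Fin n))} (hμ : IsBP n μ)
    (hμ' : IsBP n μ') {r : ℕ} (h : ∀ t, blockAt μ t = blockAt μ' (r + t)) :
    ∃ i, phiBP μ = (phiBP μ').rotate i := by
  have hlen : bpLen μ = bpLen μ' := Nat.dvd_antisymm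
    (hμ.bpLen_dvd_of_periodic (t₀ := 0) fun t _ => by
      rw [h, h, ← Nat.add_assoc, blockAt_add_bpLen])
    (hμ'.bpLen_dvd_of_periodic (t₀ := r) fun t ht => by
      obtain ⟨s, rfl⟩ := Nat.exists_eq_add_of_le ht
      rw [Nat.add_assoc, ← h, ← h, blockAt_add_bpLen])
  refine ⟨r, List.ext_getElem (by simp [phiBP, hlen]) fun t h₁ h₂ => ?_⟩
  simp only [phiBP, List.getElem_rotate, List.getElem_map, List.getElem_range, List.length_map,
    List.length_range]
  rw [h, blockAt_congr (Nat.mod_modEq _ _), Nat.add_comm]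

end Schedule

section Run

variable {n : ℕ} {X : Fin n → Type} (f : ∀ i, (∀ j, X j) → X i)
  (ν : Finset (List (Fin n)))

def bpRun (x : ∀ j, X j) : ℕ → ∀ j, X j
  | 0 => x
  | τ + 1 => blockUpdateG f (blockAt ν τ) (bpRun x τ)

theorem bpRun_add (x : ∀ j, X j) (τ k : ℕ) :
    bpRun f ν x (τ + k) =
      seqUpdateG f ((List.range k).map fun t => blockAt ν (τ + t)) (bpRun f ν x τ) := by
  induction k with
  | zero => rfl
  | succ k ih =>
    rw [← Nat.add_assoc, bpRun, ih, List.range_succ, List.map_append, seqUpdateG_append]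
    rfl

theorem iterate_bpUpdateG (x : ∀ j, X j) (m : ℕ) :
    (bpUpdateG f ν)^[m] x = bpRun f ν x (bpLen ν * m) := by
  induction m with
  | zero => rfl
  | succ m ih =>
    rw [Function.iterate_succ_apply', ih, Nat.mul_succ, bpRun_add]
    show seqUpdateG f ((List.range (bpLen ν)).map (blockAt ν)) _ = _
    congr 1
    exact List.map_congr_left fun t _ => blockAt_congr (Nat.mul_add_mod_self_left _ _ _).symm

end Run

section Absorbing

variable {n : ℕ} {Z : Type} {f : Fin n → (Fin n → Option Z) → Option Z}
  (hf : ∀ i x j, x j = none → f i x = none) {ν : Finset (List (Fin n))}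
  {x : Fin n → Option Z}
include hf

theorem bpRun_succ_eq_none {σ : ℕ} {i j : Fin n} (hj : bpRun f ν x σ j = none)
    (hi : i ∈ blockAt ν σ ∨ bpRun f ν x σ i = none) : bpRun f ν x (σ + 1) i = none := by
  simp only [bpRun, blockUpdateG]
  split_ifs with h
  · exact hf i _ j hj
  · exact hi.resolve_left h

theorem bpRun_eq_none_of_le {σ σ' : ℕ} {i : Fin n} (h : bpRun f ν x σ i = none)
    (hσ : σ ≤ σ') : bpRun f ν x σ' i = none :=
  Nat.le_induction h (fun _ _ ih => bpRun_succ_eq_none hf ih (Or.inr ih)) σ' hσ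

theorem bpUpdateG_none : bpUpdateG f ν (fun _ => none) = fun _ => none := by
  funext i
  rw [← Function.iterate_one (bpUpdateG f ν), iterate_bpUpdateG]
  exact bpRun_eq_none_of_le hf rfl (Nat.zero_le _)

theorem none_mem_limitSet : (fun _ => none) ∈ limitSet (bpUpdateG f ν) :=
  Function.IsPeriodicPt.mem_limitSet (P := 1) (bpUpdateG_none hf) one_pos

theorem IsBP.bpRun_ne_none [Finite Z] (hν : IsBP n ν) (hx : x ∈ limitSet (bpUpdateG f ν))
    (hxb : x ≠ fun _ => none) (τ : ℕ) (j : Fin n) : bpRun f ν x τ j ≠ none := by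
  intro hτ
  apply iterate_ne_of_mem_limitSet (bpUpdateG_none hf) hx hxb (τ + 1)
  rw [iterate_bpUpdateG]
  funext i
  obtain ⟨t, ht, hi⟩ := hν.exists_mem_blockAt_lt i
  have hℓ := hν.bpLen_pos
  rw [← blockAt_congr (Nat.add_mul_mod_self_left t (bpLen ν) τ)] at hi
  refine bpRun_eq_none_of_le hf (bpRun_succ_eq_none hf (bpRun_eq_none_of_le hf hτ ?_)
    (Or.inl hi)) ?_ <;> nlinarith

end Absorbing

theorem Int.eq_of_intCast_eq {N : ℕ} {x y : ℤ} (h : (x : ZMod N) = y) (h₁ : x < y + N)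
    (h₂ : y < x + N) : x = y := by
  have := Int.eq_zero_of_abs_lt_dvd ((ZMod.intCast_eq_intCast_iff_dvd_sub x y N).1 h)
    (abs_lt.2 ⟨by omega, by omega⟩)
  omega

theorem Int.exists_intCast_eq_mem_Ioc {N : ℕ} (hN : 0 < N) (a b : ℤ) :
    ∃ c ∈ Set.Ioc a (a + N), (c : ZMod N) = b := by
  have hper : Function.Periodic (fun x : ℤ => (x : ZMod N)) N := fun x => by simp
  obtain ⟨c, hc, h⟩ := hper.exists_mem_Ioc (by exact_mod_cast hN) b a
  exact ⟨c, hc, h.symm⟩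

section Clock

variable {n : ℕ}

structure IsPeriodicSchedule (A : ℤ → Finset (Fin n)) (L : ℕ) : Prop where
  periodic : Function.Periodic A L
  pos : 0 < L
  nonempty : ∀ t, (A t).Nonempty
  exists_mem_s10 : ∀ j, ∃ t, j ∈ A t

/-- The last time `s < t` with `j ∈ A s` (junk if there is none). -/
noncomputable def lastActive (A : ℤ → Finset (Fin n)) (j : Fin n) (t : ℤ) : ℤ :=
  t - 1 - sInf {m : ℕ | j ∈ A (t - 1 - m)}

variable {A : ℤ → Finset (Fin n)} {L : ℕ} {j : Fin n} {s t : ℤ}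

theorem lastActive_lt : lastActive A j t < t := by
  unfold lastActive
  omega

theorem le_lastActive (hs : s < t) (hj : j ∈ A s) : s ≤ lastActive A j t := by
  have : sInf {m : ℕ | j ∈ A (t - 1 - m)} ≤ (t - 1 - s).toNat :=
    Nat.sInf_le (show j ∈ A (t - 1 - (t - 1 - s).toNat) by rwa [Int.toNat_of_nonneg (by omega),
      sub_sub_cancel])
  unfold lastActive
  omega

theorem lastActive_add_of_periodic {c : ℤ} (hc : Function.Periodic A c) :
    lastActive A j (t + c) = lastActive A j t + c := by
  have : ∀ m : ℤ, A (t + c - 1 - m) = A (t - 1 - m) := fun m => by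
    rw [show t + c - 1 - m = t - 1 - m + c by ring, hc]
  simp only [lastActive, this]
  ring

namespace IsPeriodicSchedule

variable (hA : IsPeriodicSchedule A L)
include hA

theorem exists_mem_Ico (j : Fin n) (t : ℤ) : ∃ s ∈ Set.Ico (t - L) t, j ∈ A s := by
  obtain ⟨s₀, hs₀⟩ := hA.exists_mem_s10 j
  obtain ⟨s, hs, heq⟩ := hA.periodic.exists_mem_Ico (by exact_mod_cast hA.pos) s₀ (t - L)
  exact ⟨s, by simpa using hs, heq ▸ hs₀⟩

theorem lastActive_mem : j ∈ A (lastActive A j t) := by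
  obtain ⟨s, ⟨-, hs₂⟩, hs⟩ := hA.exists_mem_Ico j t
  have hne : {m : ℕ | j ∈ A (t - 1 - m)}.Nonempty := ⟨(t - 1 - s).toNat, by
    show j ∈ A (t - 1 - ((t - 1 - s).toNat : ℤ))
    rwa [Int.toNat_of_nonneg (by omega), sub_sub_cancel]⟩
  exact Nat.sInf_mem hne

theorem sub_le_lastActive : t - L ≤ lastActive A j t := by
  obtain ⟨s, ⟨hs₁, hs₂⟩, hs⟩ := hA.exists_mem_Ico j t
  exact hs₁.trans (le_lastActive hs₂ hs)

theorem lastActive_add_one :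
    lastActive A j (t + 1) = if j ∈ A t then t else lastActive A j t := by
  have hlt : lastActive A j (t + 1) < t + 1 := lastActive_lt
  split_ifs with hj
  · exact le_antisymm (by omega) (le_lastActive (lt_add_one t) hj)
  · have hne : lastActive A j (t + 1) ≠ t := fun h => hj (h ▸ hA.lastActive_mem)
    exact le_antisymm (le_lastActive (by omega) hA.lastActive_mem)
      (le_lastActive (lastActive_lt.trans (lt_add_one t)) hA.lastActive_mem)

theorem apply_eq_of_dvd (h : (L : ℤ) ∣ t - s) : A s = A t := by
  obtain ⟨k, hk⟩ := h
  rw [show t = s + k • (L : ℤ) by rw [smul_eq_mul]; linarith, hA.periodic.zsmul]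

end IsPeriodicSchedule

/-- Times are stored modulo `2L`: the last activations before two times at most `L` apart differ
by less than `2L`, so they are determined by their residues. -/
noncomputable def clockConf (A : ℤ → Finset (Fin n)) (L : ℕ) (t : ℤ) :
    Fin n → Option (ZMod (2 * L)) :=
  fun j => some (lastActive A j t : ZMod (2 * L))

open Classical in
noncomputable def clockNet (A : ℤ → Finset (Fin n)) (L : ℕ) (i : Fin n)
    (x : Fin n → Option (ZMod (2 * L))) : Option (ZMod (2 * L)) :=
  if h : ∃ t, i ∈ A t ∧ x = clockConf A L t then some (h.choose : ZMod (2 * L)) else none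

theorem clockConf_ne_none (t : ℤ) (j : Fin n) : clockConf A L t j ≠ none :=
  Option.some_ne_none _

theorem exists_clockConf_eq_of_clockNet_ne_none {i : Fin n} {x : Fin n → Option (ZMod (2 * L))}
    (h : clockNet A L i x ≠ none) : ∃ t, x = clockConf A L t := by
  unfold clockNet at h
  split_ifs at h with hx
  · exact hx.imp fun _ => And.right
  · exact absurd rfl h

theorem clockNet_eq_none {i j : Fin n} {x : Fin n → Option (ZMod (2 * L))} (hx : x j = none) :
    clockNet A L i x = none := by
  by_contra h
  obtain ⟨t, rfl⟩ := exists_clockConf_eq_of_clockNet_ne_none h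
  exact clockConf_ne_none t j hx

namespace IsPeriodicSchedule

variable (hA : IsPeriodicSchedule A L)
include hA

theorem clockConf_eq_of_intCast_eq (h : (s : ZMod (2 * L)) = t) :
    clockConf A L s = clockConf A L t := by
  obtain ⟨k, hk⟩ := (ZMod.intCast_eq_intCast_iff_dvd_sub s t _).1 h
  have hper : Function.Periodic A (t - s) := by
    rw [hk, show ((2 * L : ℕ) : ℤ) * k = (2 * k) • (L : ℤ) by
      push_cast; rw [smul_eq_mul]; ring]
    exact hA.periodic.zsmul _
  funext j
  rw [clockConf, clockConf, show t = s + (t - s) by ring, lastActive_add_of_periodic hper,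
    Int.cast_add, (ZMod.intCast_zmod_eq_zero_iff_dvd _ _).2 ⟨k, hk⟩, add_zero]

theorem clockConf_ne_of_lt (h₁ : s < t) (h₂ : t ≤ s + L) :
    clockConf A L s ≠ clockConf A L t := by
  intro h
  obtain ⟨j, hj⟩ := hA.nonempty s
  have hj' := congrFun h j
  simp only [clockConf, Option.some.injEq] at hj'
  have h₃ := le_lastActive h₁ hj
  have h₄ := hA.sub_le_lastActive (j := j) (t := s)
  have h₅ : lastActive A j s < s := lastActive_lt
  have h₆ : lastActive A j t < t := lastActive_lt
  have := Int.eq_of_intCast_eq hj' (by push_cast; omega) (by push_cast; omega)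
  omega

theorem clockConf_eq_iff : clockConf A L s = clockConf A L t ↔ (s : ZMod (2 * L)) = t := by
  refine ⟨fun h => ?_, hA.clockConf_eq_of_intCast_eq⟩
  have hL := hA.pos
  obtain ⟨t', ⟨ht'₁, ht'₂⟩, ht'⟩ :=
    Int.exists_intCast_eq_mem_Ioc (by omega : 0 < 2 * L) (s - 1) t
  rw [← hA.clockConf_eq_of_intCast_eq ht'] at h
  rcases (show s ≤ t' by omega).eq_or_lt with rfl | hlt
  · exact ht'
  rcases le_or_gt t' (s + L) with hle | hgt
  · exact absurd h (hA.clockConf_ne_of_lt hlt hle)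
  · refine absurd (h.symm.trans (hA.clockConf_eq_of_intCast_eq ?_))
      (hA.clockConf_ne_of_lt (s := t') (t := s + 2 * L) (by push_cast at ht'₂; omega) (by omega))
    rw [Int.cast_add, show ((2 * L : ℤ) : ZMod (2 * L)) = ((2 * L : ℕ) : ZMod (2 * L)) by
      push_cast; rfl, ZMod.natCast_self, add_zero]

theorem apply_eq_of_intCast_eq (h : (s : ZMod (2 * L)) = t) : A s = A t :=
  hA.apply_eq_of_dvd <| (Dvd.intro_left 2 (by push_cast; ring)).trans
    ((ZMod.intCast_eq_intCast_iff_dvd_sub s t _).1 h)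

theorem clockNet_clockConf (i : Fin n) (t : ℤ) :
    clockNet A L i (clockConf A L t) = if i ∈ A t then some (t : ZMod (2 * L)) else none := by
  unfold clockNet
  split_ifs with h hi hi
  · exact congrArg some (hA.clockConf_eq_iff.1 h.choose_spec.2).symm
  · exact absurd (hA.apply_eq_of_intCast_eq (hA.clockConf_eq_iff.1 h.choose_spec.2) ▸
      h.choose_spec.1) hi
  · exact absurd ⟨t, hi, rfl⟩ h
  · rfl

theorem blockUpdateG_clockConf (t : ℤ) :
    blockUpdateG (clockNet A L) (A t) (clockConf A L t) = clockConf A L (t + 1) := by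
  funext j
  simp only [blockUpdateG, hA.clockNet_clockConf, clockConf, hA.lastActive_add_one]
  split_ifs <;> rfl

/-- An updated automaton pins `b` to at most `a + L`, after which nobody is active strictly
between `a` and `b`; as some automaton is active at every time, `b = a + 1`. -/
theorem clockConf_step_of_lt {W : Finset (Fin n)} {a b : ℤ} (hW : W.Nonempty) (hWA : W ⊆ A a)
    (hab : a < b) (hba : b ≤ a + 2 * L)
    (h : ∀ j, clockConf A L b j =
      if j ∈ W then some (a : ZMod (2 * L)) else clockConf A L a j) :
    b = a + 1 ∧ W = A a := by
  simp only [clockConf] at h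
  have hupd : ∀ i ∈ W, lastActive A i b = a := fun i hi => by
    have hcast := h i
    rw [if_pos hi, Option.some.injEq] at hcast
    have h₁ : lastActive A i b < b := lastActive_lt
    have h₂ := hA.sub_le_lastActive (j := i) (t := b)
    exact Int.eq_of_intCast_eq hcast (by omega) (by omega)
  obtain ⟨i, hi⟩ := hW
  have hbL : b ≤ a + L := by
    have := hA.sub_le_lastActive (j := i) (t := b)
    rw [hupd i hi] at this
    omega
  have hkeep : ∀ j ∉ W, lastActive A j b = lastActive A j a := fun j hj => by
    have hcast := h j
    rw [if_neg hj, Option.some.injEq] at hcast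
    have h₁ : lastActive A j b < b := lastActive_lt
    have h₂ := hA.sub_le_lastActive (j := j) (t := b)
    have h₃ : lastActive A j a < a := lastActive_lt
    have h₄ := hA.sub_le_lastActive (j := j) (t := a)
    exact Int.eq_of_intCast_eq hcast (by omega) (by omega)
  have hle : ∀ j, lastActive A j b ≤ a := fun j => by
    by_cases hj : j ∈ W
    · exact (hupd j hj).le
    · exact hkeep j hj ▸ lastActive_lt.le
  have hba : b = a + 1 := by
    by_contra hne
    obtain ⟨j, hj⟩ := hA.nonempty (a + 1)
    have := le_lastActive (t := b) (by omega) hj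
    have := hle j
    omega
  refine ⟨hba, hWA.antisymm fun j hj => by_contra fun hjW => ?_⟩
  have h₁ := le_lastActive (t := b) (by omega) hj
  have h₂ : lastActive A j a < a := lastActive_lt
  rw [hkeep j hjW] at h₁
  omega

theorem clockConf_step {W : Finset (Fin n)} {a b : ℤ} (hW : W.Nonempty) (hWA : W ⊆ A a)
    (h : ∀ j, clockConf A L b j =
      if j ∈ W then some (a : ZMod (2 * L)) else clockConf A L a j) :
    (b : ZMod (2 * L)) = a + 1 ∧ W = A a := by
  have hL := hA.pos
  obtain ⟨b', ⟨hb'₁, hb'₂⟩, hb'⟩ :=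
    Int.exists_intCast_eq_mem_Ioc (N := 2 * L) (by omega) a b
  rw [← hA.clockConf_eq_of_intCast_eq hb'] at h
  obtain ⟨rfl, hWeq⟩ := hA.clockConf_step_of_lt hW hWA hb'₁ (by push_cast at hb'₂; omega) h
  exact ⟨by rw [← hb']; push_cast; rfl, hWeq⟩

end IsPeriodicSchedule

end Clock

section Forcing

variable {n : ℕ} {A : ℤ → Finset (Fin n)} {L : ℕ}

theorem IsPeriodicSchedule.bpRun_clockConf (hA : IsPeriodicSchedule A L)
    {ν : Finset (List (Fin n))} (hν : ∀ τ : ℕ, blockAt ν τ = A τ) (τ : ℕ) :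
    bpRun (clockNet A L) ν (clockConf A L 0) τ = clockConf A L τ := by
  induction τ with
  | zero => rfl
  | succ τ ih => rw [bpRun, ih, hν, hA.blockUpdateG_clockConf, Nat.cast_succ]

theorem IsPeriodicSchedule.clockConf_mem_limitSet (hA : IsPeriodicSchedule A L)
    {ν : Finset (List (Fin n))} (hν : ∀ τ : ℕ, blockAt ν τ = A τ) (hL : bpLen ν = L) :
    clockConf A L 0 ∈ limitSet (bpUpdateG (clockNet A L) ν) := by
  refine Function.IsPeriodicPt.mem_limitSet (P := 2) ?_ two_pos
  rw [Function.IsPeriodicPt, Function.IsFixedPt, iterate_bpUpdateG, hA.bpRun_clockConf hν, hL]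
  refine hA.clockConf_eq_of_intCast_eq ?_
  rw [Int.cast_natCast, Nat.mul_comm, ZMod.natCast_self, Int.cast_zero]

theorem IsPeriodicSchedule.exists_blockAt_eq_of_mem_limitSet (hA : IsPeriodicSchedule A L)
    {μ : Finset (List (Fin n))} (hμ : IsBP n μ) {x : Fin n → Option (ZMod (2 * L))}
    (hx : x ∈ limitSet (bpUpdateG (clockNet A L) μ)) (hxb : x ≠ fun _ => none) :
    ∃ r : ℕ, ∀ τ : ℕ, blockAt μ τ = A (r + τ) := by
  have : NeZero L := ⟨hA.pos.ne'⟩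
  have : Nonempty (Fin n) := ⟨(hA.nonempty 0).choose⟩
  set c := bpRun (clockNet A L) μ x
  have hsome : ∀ τ j, c τ j ≠ none :=
    hμ.bpRun_ne_none (fun _ _ _ => clockNet_eq_none) hx hxb
  have hupd : ∀ τ j, c (τ + 1) j =
      if j ∈ blockAt μ τ then clockNet A L j (c τ) else c τ j := fun _ _ => rfl
  have hconf : ∀ τ, ∃ a, c τ = clockConf A L a := fun τ => by
    obtain ⟨i, hi⟩ := hμ.blockAt_nonempty τ
    have := hsome (τ + 1) i
    rw [hupd, if_pos hi] at this
    exact exists_clockConf_eq_of_clockNet_ne_none this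
  choose v hv using hconf
  have hstep : ∀ τ, (v (τ + 1) : ZMod (2 * L)) = v τ + 1 ∧ blockAt μ τ = A (v τ) :=
      fun τ => by
    have hWA : blockAt μ τ ⊆ A (v τ) := fun i hi => by_contra fun hiA => hsome (τ + 1) i <| by
      rw [hupd, if_pos hi, hv, hA.clockNet_clockConf, if_neg hiA]
    refine hA.clockConf_step (hμ.blockAt_nonempty τ) hWA fun j => ?_
    rw [← hv (τ + 1), hupd, hv τ, hA.clockNet_clockConf]
    by_cases hj : j ∈ blockAt μ τ
    · rw [if_pos hj, if_pos hj, if_pos (hWA hj)]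
    · rw [if_neg hj, if_neg hj]
  set r := (v 0 : ZMod (2 * L)).val
  have hlin : ∀ τ : ℕ, (v τ : ZMod (2 * L)) = ((r + τ : ℤ) : ZMod (2 * L)) := by
    intro τ
    induction τ with
    | zero => simp [r]
    | succ τ ih => rw [(hstep τ).1, ih]; push_cast; ring
  exact ⟨r, fun τ => (hstep τ).2.trans (hA.apply_eq_of_intCast_eq (hlin τ))⟩

end Forcing

section IntegerTime

variable {n : ℕ} {ν : Finset (List (Fin n))}

def blockAtInt (ν : Finset (List (Fin n))) (t : ℤ) : Finset (Fin n) :=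
  blockAt ν (t % bpLen ν).toNat

theorem blockAtInt_natCast (t : ℕ) : blockAtInt ν t = blockAt ν t := by
  rw [blockAtInt, ← Int.natCast_mod, Int.toNat_natCast]
  exact blockAt_congr (Nat.mod_modEq _ _)

theorem IsBP.isPeriodicSchedule_blockAtInt [Nonempty (Fin n)] (hν : IsBP n ν) :
    IsPeriodicSchedule (blockAtInt ν) (bpLen ν) where
  periodic t := by rw [blockAtInt, blockAtInt, Int.add_emod_right]
  pos := hν.bpLen_pos
  nonempty _ := hν.blockAt_nonempty _
  exists_mem_s10 j :=
    let ⟨t, _, ht⟩ := hν.exists_mem_blockAt_lt j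
    ⟨t, (blockAtInt_natCast t).symm ▸ ht⟩

end IntegerTime

/-- `μ ≡⋆ μ'` (i.e. `φ(μ)` is a cyclic shift of `φ(μ')`) iff for every automata
network `f` over arbitrary finite nonempty alphabets, the restrictions of
`f^⟨μ⟩` and `f^⟨μ'⟩` to their limit sets are isomorphic dynamics. -/
theorem equiv_star_iff_limit_iso (n : ℕ) (hn : 1 ≤ n) (μ μ' : Finset (List (Fin n)))
    (hμ : IsBP n μ) (hμ' : IsBP n μ') :
    (∃ i, phiBP μ = (phiBP μ').rotate i) ↔
      ∀ (X : Fin n → Type) (_ : ∀ i, Fintype (X i)) (_ : ∀ i, Nonempty (X i))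
        (f : ∀ i : Fin n, (∀ j, X j) → X i),
        ∃ π : (∀ j, X j) → (∀ j, X j),
          Set.BijOn π (limitSet (bpUpdateG f μ)) (limitSet (bpUpdateG f μ')) ∧
          ∀ x ∈ limitSet (bpUpdateG f μ),
            π (bpUpdateG f μ x) = bpUpdateG f μ' (π x) := by
  constructor
  · rintro ⟨i, h⟩ X hX - f
    have : ∀ j, Fintype (X j) := hX
    rw [bpUpdateG, bpUpdateG, h]
    exact limitIsomorphic_seqUpdateG_rotate f _ i
  · intro H
    have : Nonempty (Fin n) := ⟨⟨0, hn⟩⟩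
    have hA := hμ'.isPeriodicSchedule_blockAtInt
    have : NeZero (bpLen μ') := ⟨hA.pos.ne'⟩
    set f := clockNet (blockAtInt μ') (bpLen μ')
    obtain ⟨π, hπ, -⟩ := H _ (fun _ => inferInstance) (fun _ => inferInstance) f
    have hnt : (limitSet (bpUpdateG f μ')).Nontrivial :=
      ⟨_, hA.clockConf_mem_limitSet (fun τ => (blockAtInt_natCast τ).symm) rfl,
        _, none_mem_limitSet fun _ _ _ => clockNet_eq_none,
        fun h => clockConf_ne_none 0 ⟨0, hn⟩ (congrFun h _)⟩
    obtain ⟨x, hx, hxb⟩ :=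
      (Set.nontrivial_of_image π _ (hπ.image_eq ▸ hnt)).exists_ne fun _ => none
    obtain ⟨r, hr⟩ := hA.exists_blockAt_eq_of_mem_limitSet hμ hx hxb
    exact exists_rotate_of_blockAt_eq hμ hμ' fun τ => by
      rw [hr, ← Nat.cast_add, blockAtInt_natCast]
end

section
/- For every nonempty finite set S of positive integers, defining for each j ∈ S the value a(j) = gcd(j, lcm{ k ∈ S : k > j }) (with the convention lcm(∅) = 1), one has ∏_{j ∈ S} (j / a(j)) = lcm(S); equivalently, lcm(S) · ∏_{j ∈ S} gcd(j, lcm{ k ∈ S : k > j }) = ∏_{j ∈ S} j. -/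
open Finset Nat

/-! Induct on the smallest element `a`: removing it from `s` only drops the factor
`gcd (f a) (s.lcm f)` from the product, and `lcm (f a) L * gcd (f a) L = f a * L`. -/

theorem Finset.filter_lt_insert_of_forall_lt {ι : Type*} [LinearOrder ι] {a : ι}
    {s : Finset ι} (ha : ∀ x ∈ s, a < x) {j : ι} (hj : j ∈ insert a s) :
    (insert a s).filter (j < ·) = s.filter (j < ·) := by
  rw [filter_insert, if_neg]
  rcases mem_insert.mp hj with rfl | hj
  · exact lt_irrefl j
  · exact (ha j hj).asymm

theorem Finset.lcm_mul_prod_gcd_lcm_filter_lt {ι : Type*} [LinearOrder ι] (s : Finset ι)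
    (f : ι → ℕ) :
    s.lcm f * ∏ j ∈ s, Nat.gcd (f j) ((s.filter (j < ·)).lcm f) = ∏ j ∈ s, f j := by
  induction s using Finset.induction_on_min with
  | empty => simp
  | insert a s ha ih =>
    have has : a ∉ s := fun h => lt_irrefl a (ha a h)
    have hfilter_a : (insert a s).filter (a < ·) = s := by
      rw [filter_lt_insert_of_forall_lt ha (mem_insert_self a s)]
      exact filter_true_of_mem ha
    rw [prod_insert has, prod_insert has, hfilter_a, lcm_insert, ← ih,
      prod_congr rfl fun j hj => by rw [filter_lt_insert_of_forall_lt ha (mem_insert_of_mem hj)]]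
    have hgcd_lcm : GCDMonoid.lcm (f a) (s.lcm f) * Nat.gcd (f a) (s.lcm f) = f a * s.lcm f :=
      (mul_comm _ _).trans (Nat.gcd_mul_lcm _ _)
    rw [← mul_assoc, hgcd_lcm, mul_assoc]

theorem lcm_mul_prod_gcd_general (S : Finset ℕ) :
    S.lcm id * ∏ j ∈ S, Nat.gcd j ((S.filter fun k => j < k).lcm id) = ∏ j ∈ S, j :=
  S.lcm_mul_prod_gcd_lcm_filter_lt id

/-- For every nonempty finite set `S` of positive integers, with
`a(j) = gcd(j, lcm{k ∈ S : k > j})`, one has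
`lcm(S) · ∏_{j ∈ S} a(j) = ∏_{j ∈ S} j` (equivalently `∏_{j∈S} (j / a(j)) = lcm S`). -/
theorem lcm_mul_prod_gcd (S : Finset ℕ) (hS : S.Nonempty) (hpos : ∀ j ∈ S, 0 < j) :
    S.lcm id * ∏ j ∈ S, Nat.gcd j ((S.filter fun k => j < k).lcm id) = ∏ j ∈ S, j :=
  lcm_mul_prod_gcd_general S
end

section
/- For every natural number n ≥ 2, there exists a finite set P of prime numbers, all distinct and each strictly smaller than n², such that 2^n < ∏_{p ∈ P} p < 2^{2n²}. -/
/-!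
Take all primes below `n²`. Their product is `(n² - 1)# ≤ 4 ^ (n² - 1) < 2 ^ (2n²)`.
For the lower bound, `2 ^ N ≤ (N + 1) · lcm(1, …, N)` and `lcm(1, …, N) = ∏ p ^ ⌊log_p N⌋`,
where only the primes `p ≤ √N` occur with exponent above one, each contributing at most `N`.
Hence `2 ^ N ≤ (N + 1) ^ (√N + 1) · N#`, which for `N = n² - 1` and `n ≥ 16` forces
`N# > 2 ^ n`; smaller `n` are checked directly.
-/

open Finset Nat

namespace Nat

theorem pow_four_le_two_pow {n : ℕ} (hn : 16 ≤ n) : n ^ 4 ≤ 2 ^ n := by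
  induction n, hn using Nat.le_induction with
  | base => norm_num
  | succ m hm ih =>
    calc (m + 1) ^ 4 ≤ 2 * m ^ 4 := by nlinarith [Nat.mul_le_mul_right (m ^ 3) hm]
      _ ≤ 2 ^ (m + 1) := (Nat.mul_le_mul_left 2 ih).trans_eq (by ring)

theorem lcmUpto_le_pow_sqrt_mul_primorial (N : ℕ) :
    lcmUpto N ≤ N ^ sqrt N * primorial N := by
  have hfactor : ∀ p ∈ primesLE N, p ^ p.log N ≤ p * if p ≤ sqrt N then N else 1 := by
    intro p hp
    obtain ⟨hpN, hp⟩ := mem_primesLE.mp hp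
    split_ifs with hps
    · exact (pow_log_le_self p (hp.pos.trans_le hpN).ne').trans (Nat.le_mul_of_pos_left N hp.pos)
    · have hlog : p.log N < 2 :=
        log_lt_of_lt_pow (hp.pos.trans_le hpN).ne' (sqrt_lt'.mp (by omega))
      calc p ^ p.log N ≤ p ^ 1 := Nat.pow_le_pow_right hp.pos (by omega)
        _ = p * 1 := by ring
  have hsmall : #{p ∈ primesLE N | p ≤ sqrt N} ≤ sqrt N := by
    calc #{p ∈ primesLE N | p ≤ sqrt N} ≤ #(Icc 1 (sqrt N)) := by
          refine card_le_card fun p hp => ?_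
          simp only [mem_filter, mem_primesLE, mem_Icc] at hp ⊢
          exact ⟨hp.1.2.one_le, hp.2⟩
      _ = sqrt N := by simp
  rcases N.eq_zero_or_pos with rfl | hN
  · decide
  calc lcmUpto N = ∏ p ∈ primesLE N, p ^ p.log N := lcmUpto_eq_prod_pow_log N
    _ ≤ ∏ p ∈ primesLE N, p * if p ≤ sqrt N then N else 1 := prod_le_prod' hfactor
    _ = N ^ #{p ∈ primesLE N | p ≤ sqrt N} * primorial N := by
      rw [prod_mul_distrib, ← prod_filter, prod_const, primorial_eq_prod_primesLE, mul_comm]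
    _ ≤ N ^ sqrt N * primorial N := Nat.mul_le_mul_right _ (Nat.pow_le_pow_right hN hsmall)

theorem two_pow_le_pow_sqrt_mul_primorial (N : ℕ) :
    2 ^ N ≤ (N + 1) ^ (sqrt N + 1) * primorial N :=
  calc 2 ^ N ≤ (N + 1) * lcmUpto N := Chebyshev.two_pow_le_mul_lcmUpto N
    _ ≤ (N + 1) * ((N + 1) ^ sqrt N * primorial N) := by
      gcongr
      exact (lcmUpto_le_pow_sqrt_mul_primorial N).trans (by gcongr; omega)
    _ = (N + 1) ^ (sqrt N + 1) * primorial N := by ring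

theorem two_pow_lt_primorial_sq_sub_one {n : ℕ} (hn : 2 ≤ n) :
    2 ^ n < primorial (n ^ 2 - 1) := by
  rcases lt_or_ge n 16 with hn16 | hn16
  · rcases lt_or_ge n 5 with hn5 | hn5
    · interval_cases n <;> decide
    calc 2 ^ n < 2 ^ 16 := Nat.pow_lt_pow_right (by norm_num) hn16
      _ < primorial 24 := by decide
      _ ≤ primorial (n ^ 2 - 1) := primorial_mono (Nat.le_sub_one_of_lt (by nlinarith))
  set N := n ^ 2 - 1
  have hN1 : N + 1 = n ^ 2 := Nat.sub_add_cancel (Nat.one_le_pow _ _ (by omega))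
  have hsqrt : sqrt N + 1 ≤ n := sqrt_lt'.mpr (by omega)
  have hcheb : 2 ^ N ≤ (n ^ 2) ^ n * primorial N := by
    calc 2 ^ N ≤ (N + 1) ^ (sqrt N + 1) * primorial N := two_pow_le_pow_sqrt_mul_primorial N
      _ ≤ (n ^ 2) ^ n * primorial N := by
        rw [hN1]; exact Nat.mul_le_mul_right _ (Nat.pow_le_pow_right (by positivity) hsqrt)
  -- Squaring turns `(n ^ 2) ^ n` into `(n ^ 4) ^ n ≤ 2 ^ (n ^ 2)`.
  by_contra! hprim
  have hpow : 2 ^ (2 * N) ≤ 2 ^ (n ^ 2 + 2 * n) :=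
    calc 2 ^ (2 * N) = (2 ^ N) ^ 2 := by ring
      _ ≤ ((n ^ 2) ^ n * 2 ^ n) ^ 2 := by gcongr; exact hcheb.trans (by gcongr)
      _ = (n ^ 4) ^ n * 2 ^ (2 * n) := by ring
      _ ≤ (2 ^ n) ^ n * 2 ^ (2 * n) := by gcongr ?_ ^ n * _; exact pow_four_le_two_pow hn16
      _ = 2 ^ (n ^ 2 + 2 * n) := by ring
  have hexp : 2 * N ≤ n ^ 2 + 2 * n := (Nat.pow_le_pow_iff_right (by norm_num)).mp hpow
  nlinarith

end Nat

/-- For every `n ≥ 2` there is a finite set of primes, each `< n²`, whose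
product lies strictly between `2^n` and `2^(2n²)`. -/
theorem exists_primes_product_between (n : ℕ) (hn : 2 ≤ n) :
    ∃ P : Finset ℕ, (∀ p ∈ P, Nat.Prime p ∧ p < n ^ 2) ∧
      2 ^ n < ∏ p ∈ P, p ∧ ∏ p ∈ P, p < 2 ^ (2 * n ^ 2) := by
  have hn2 : 1 ≤ n ^ 2 := Nat.one_le_pow _ _ (by omega)
  refine ⟨primesLE (n ^ 2 - 1), fun p hp => ?_, two_pow_lt_primorial_sq_sub_one hn, ?_⟩
  · obtain ⟨hpn, hp⟩ := mem_primesLE.mp hp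
    exact ⟨hp, by omega⟩
  calc ∏ p ∈ primesLE (n ^ 2 - 1), p = primorial (n ^ 2 - 1) := rfl
    _ ≤ 4 ^ (n ^ 2 - 1) := primorial_le_four_pow _
    _ < 4 ^ n ^ 2 := Nat.pow_lt_pow_right (by norm_num) (by omega)
    _ = 2 ^ (2 * n ^ 2) := by rw [pow_mul]; norm_num
end

section
/- For every natural number n ≥ 2, there exist a natural number N ≤ n⁴ and a block-parallel update schedule μ ∈ BP_N such that the number of substeps |φ(μ)|, i.e., the least common multiple of the lengths of the o-blocks of μ, is strictly greater than 2^n. -/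
open Finset Nat

/-! Lay out `N = 1 + 2 + ⋯ + 2n = n(2n + 1) ≤ n⁴` elements in o-blocks of lengths `1, …, 2n`.
The number of substeps is then `lcm(1, …, 2n)`, which is divisible by `C(2n, n)` because every
prime power dividing `C(2n, n)` is at most `2n`; and `C(2n, n) > 2ⁿ` for `n ≥ 2`. -/

namespace BlockParallel

variable {ι : Type*} {len : ι → ℕ} {N : ℕ}

def oBlock (e : (Σ i, Fin (len i)) ≃ Fin N) (i : ι) : List (Fin N) :=
  List.ofFn fun k => e ⟨i, k⟩

def oBlocks [Fintype ι] (e : (Σ i, Fin (len i)) ≃ Fin N) : Finset (List (Fin N)) :=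
  Finset.univ.image (oBlock e)

lemma mem_oBlock_iff (e : (Σ i, Fin (len i)) ≃ Fin N) {i : ι} {x : Fin N} :
    x ∈ oBlock e i ↔ (e.symm x).1 = i := by
  rw [oBlock, List.mem_ofFn]
  constructor
  · rintro ⟨k, rfl⟩
    simp
  · rintro rfl
    exact ⟨(e.symm x).2, e.apply_symm_apply x⟩

lemma nodup_oBlock (e : (Σ i, Fin (len i)) ≃ Fin N) (i : ι) : (oBlock e i).Nodup :=
  List.nodup_ofFn.mpr (e.injective.comp sigma_mk_injective)

lemma oBlock_injective (e : (Σ i, Fin (len i)) ≃ Fin N) (hlen : ∀ i, 0 < len i) :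
    Function.Injective (oBlock e) := by
  intro i j hij
  have hmem : e ⟨i, ⟨0, hlen i⟩⟩ ∈ oBlock e j := hij ▸ (mem_oBlock_iff e).mpr (by simp)
  simpa using (mem_oBlock_iff e).mp hmem

lemma isBP_oBlocks [Fintype ι] (e : (Σ i, Fin (len i)) ≃ Fin N) (hlen : ∀ i, 0 < len i) :
    IsBP N (oBlocks e) := by
  refine ⟨?_, fun x => ?_⟩
  · simp only [oBlocks, mem_image, mem_univ, true_and]
    rintro _ ⟨i, rfl⟩
    simpa [oBlock, Nat.pos_iff_ne_zero] using hlen i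
  · classical
    rw [oBlocks, sum_image fun i _ j _ hij => oBlock_injective e hlen hij]
    simp only [(nodup_oBlock e _).count, mem_oBlock_iff, sum_ite_eq, mem_univ, if_true]

lemma bpLen_oBlocks [Fintype ι] (e : (Σ i, Fin (len i)) ≃ Fin N) :
    bpLen (oBlocks e) = (univ : Finset ι).lcm len := by
  rw [bpLen, oBlocks, lcm_image]
  exact lcm_congr rfl fun i _ => List.length_ofFn

theorem exists_isBP_bpLen_eq [Fintype ι] (len : ι → ℕ) (hlen : ∀ i, 0 < len i) :
    ∃ μ : Finset (List (Fin (∑ i, len i))), IsBP _ μ ∧ bpLen μ = (univ : Finset ι).lcm len :=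
  let e := Fintype.equivFinOfCardEq (by simp)
  ⟨oBlocks e, isBP_oBlocks e hlen, bpLen_oBlocks e⟩

end BlockParallel

namespace Nat

lemma two_mul_centralBinom_le_succ (m : ℕ) : 2 * centralBinom m ≤ centralBinom (m + 1) := by
  have h := succ_mul_centralBinom_succ m
  refine Nat.le_of_mul_le_mul_left ?_ (succ_pos m)
  nlinarith [centralBinom_pos m]

lemma two_pow_lt_centralBinom {m : ℕ} (hm : 2 ≤ m) : 2 ^ m < centralBinom m := by
  induction m, hm using Nat.le_induction with
  | base => decide
  | succ m _ ih => calc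
      2 ^ (m + 1) = 2 * 2 ^ m := by ring
      _ < 2 * centralBinom m := by omega
      _ ≤ centralBinom (m + 1) := two_mul_centralBinom_le_succ m

lemma centralBinom_dvd_lcmUpto (m : ℕ) : centralBinom m ∣ lcmUpto (2 * m) :=
  Chebyshev.choose_dvd_lcmUpto (by omega)

lemma lcm_univ_fin_add_one (m : ℕ) :
    (univ : Finset (Fin m)).lcm (fun j => (j : ℕ) + 1) = lcmUpto m := by
  have h : Icc 1 m = (univ : Finset (Fin m)).image fun j : Fin m => (j : ℕ) + 1 := by
    ext k
    simp only [mem_Icc, mem_image, mem_univ, true_and]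
    exact ⟨fun hk => ⟨⟨k - 1, by omega⟩, by simp; omega⟩, by rintro ⟨j, rfl⟩; omega⟩
  rw [lcmUpto, h, lcm_image]
  rfl

lemma two_mul_sum_fin_add_one (m : ℕ) : 2 * ∑ j : Fin m, ((j : ℕ) + 1) = m * (m + 1) := by
  rw [Fin.sum_univ_eq_sum_range (fun j => j + 1)]
  induction m with
  | zero => rfl
  | succ m ih => rw [sum_range_succ, mul_add, ih]; ring

end Nat

/-- For every `n ≥ 2` there exist `N ≤ n⁴` and a block-parallel update schedule
`μ ∈ BP_N` whose number of substeps `|φ(μ)|` (the lcm of the o-block lengths)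
is strictly greater than `2^n`. -/
theorem exists_bp_many_substeps (n : ℕ) (hn : 2 ≤ n) :
    ∃ N ≤ n ^ 4, ∃ μ : Finset (List (Fin N)), IsBP N μ ∧ 2 ^ n < bpLen μ := by
  obtain ⟨μ, hμ, hμlen⟩ :=
    BlockParallel.exists_isBP_bpLen_eq (fun j : Fin (2 * n) => (j : ℕ) + 1) fun _ => succ_pos _
  refine ⟨_, ?_, μ, hμ, ?_⟩
  · have hN := two_mul_sum_fin_add_one (2 * n)
    have : 4 ≤ n * n := Nat.mul_le_mul hn hn
    nlinarith
  · rw [hμlen, lcm_univ_fin_add_one]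
    exact (two_pow_lt_centralBinom hn).trans_le <|
      le_of_dvd (lcmUpto_pos _) (centralBinom_dvd_lcmUpto n)
end
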